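/- HA proves that Σ_k-LEM is equivalent to F_k-LEM: the law of excluded middle for Σ_k formulas implies (and is implied by) the law of excluded middle for all formulas of degree at most k. -/

import Mathlib

namespace SemiClassicalArith

/-- Terms of arithmetic: variables (de Bruijn indices) and function symbols
(one symbol of each arity for every code, covering all primitive recursive functions). -/
inductive Term : Type
  | var : ℕ → Term
  | func : (code : ℕ) → (arity : ℕ) → (Fin arity → Term) → Term

namespace Term

/-- Shift all variables `≥ d` up by one. -/
def lift (d : ℕ) : Term → Term
  | var n => if n < d then var n else var (n + 1)
  | func c a ts => func c a fun i => (ts i).lift d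

/-- Binder-removing substitution of `s` for variable `k`. -/
def subst (k : ℕ) (s : Term) : Term → Term
  | var n => if n < k then var n else if n = k then s else var (n - 1)
  | func c a ts => func c a fun i => Term.subst k s (ts i)

/-- In-place replacement of variable `k` by `s` (no shifting of other variables). -/
def repl (k : ℕ) (s : Term) : Term → Term
  | var n => if n = k then s else var n
  | func c a ts => func c a fun i => Term.repl k s (ts i)

/-- Free variables of a term. -/
def fv : Term → Finset ℕ
  | var n => {n}
  | func _ _ ts => Finset.univ.sup fun i => (ts i).fv

/-- The constant zero (function symbol of arity 0, code 0). -/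
def zero : Term := func 0 0 (fun i => i.elim0)

/-- Successor (function symbol of arity 1, code 1). -/
def succ (t : Term) : Term := func 1 1 (fun _ => t)

end Term

/-- Formulas of arithmetic in the language with an extra nullary predicate
symbol `$` (`dollar`), used as a place holder. Quantifiers use de Bruijn indices. -/
inductive Formula : Type
  | falsum : Formula
  | dollar : Formula
  | eq : Term → Term → Formula
  | and : Formula → Formula → Formula
  | or : Formula → Formula → Formula
  | imp : Formula → Formula → Formula
  | all : Formula → Formula
  | ex : Formula → Formula

namespace Formula

def neg (φ : Formula) : Formula := φ.imp falsum

def iff (φ ψ : Formula) : Formula := (φ.imp ψ).and (ψ.imp φ)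

/-- `¬_$ φ`, i.e. `φ → $`. -/
def negD (φ : Formula) : Formula := φ.imp dollar

def lift (d : ℕ) : Formula → Formula
  | falsum => falsum
  | dollar => dollar
  | eq t u => eq (t.lift d) (u.lift d)
  | and φ ψ => and (φ.lift d) (ψ.lift d)
  | or φ ψ => or (φ.lift d) (ψ.lift d)
  | imp φ ψ => imp (φ.lift d) (ψ.lift d)
  | all φ => all (φ.lift (d + 1))
  | ex φ => ex (φ.lift (d + 1))

/-- Binder-removing substitution of term `s` for variable `k`. -/
def subst (k : ℕ) (s : Term) : Formula → Formula
  | falsum => falsum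
  | dollar => dollar
  | eq t u => eq (Term.subst k s t) (Term.subst k s u)
  | and φ ψ => and (Formula.subst k s φ) (Formula.subst k s ψ)
  | or φ ψ => or (Formula.subst k s φ) (Formula.subst k s ψ)
  | imp φ ψ => imp (Formula.subst k s φ) (Formula.subst k s ψ)
  | all φ => all (Formula.subst (k + 1) (s.lift 0) φ)
  | ex φ => ex (Formula.subst (k + 1) (s.lift 0) φ)

/-- In-place replacement of variable `k` by term `s`. -/
def repl (k : ℕ) (s : Term) : Formula → Formula
  | falsum => falsum
  | dollar => dollar
  | eq t u => eq (Term.repl k s t) (Term.repl k s u)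
  | and φ ψ => and (Formula.repl k s φ) (Formula.repl k s ψ)
  | or φ ψ => or (Formula.repl k s φ) (Formula.repl k s ψ)
  | imp φ ψ => imp (Formula.repl k s φ) (Formula.repl k s ψ)
  | all φ => all (Formula.repl (k + 1) (s.lift 0) φ)
  | ex φ => ex (Formula.repl (k + 1) (s.lift 0) φ)

/-- Free variables of a formula. -/
def fv : Formula → Finset ℕ
  | falsum => ∅
  | dollar => ∅
  | eq t u => t.fv ∪ u.fv
  | and φ ψ => φ.fv ∪ ψ.fv
  | or φ ψ => φ.fv ∪ ψ.fv
  | imp φ ψ => φ.fv ∪ ψ.fv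
  | all φ => (φ.fv.erase 0).image (· - 1)
  | ex φ => (φ.fv.erase 0).image (· - 1)

/-- A sentence is a formula with no free variables. -/
def sentence (φ : Formula) : Prop := φ.fv = ∅

/-- The formula is in the language of `HA` (the placeholder `$` does not occur). -/
def noDollar : Formula → Prop
  | falsum => True
  | dollar => False
  | eq _ _ => True
  | and φ ψ => φ.noDollar ∧ ψ.noDollar
  | or φ ψ => φ.noDollar ∧ ψ.noDollar
  | imp φ ψ => φ.noDollar ∧ ψ.noDollar
  | all φ => φ.noDollar
  | ex φ => φ.noDollar

/-- Quantifier-free formula of `HA`. -/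
def isQF : Formula → Prop
  | falsum => True
  | dollar => False
  | eq _ _ => True
  | and φ ψ => φ.isQF ∧ ψ.isQF
  | or φ ψ => φ.isQF ∧ ψ.isQF
  | imp φ ψ => φ.isQF ∧ ψ.isQF
  | all _ => False
  | ex _ => False

/-- Flip `+`/`-` in an alternation path (`true` = `+`, `false` = `-`). -/
def pflip (s : List Bool) : List Bool := s.map (!·)

/-- The set of alternation paths of a formula (Akama–Berardi–Hayashi–Kohlenbach). -/
def alt : Formula → Finset (List Bool)
  | falsum => {([] : List Bool)}
  | dollar => {([] : List Bool)}
  | eq _ _ => {([] : List Bool)}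
  | and φ ψ => φ.alt ∪ ψ.alt
  | or φ ψ => φ.alt ∪ ψ.alt
  | imp φ ψ => φ.alt.image pflip ∪ ψ.alt
  | all φ => φ.alt.image (fun s => if s.head? = some false then s else false :: s)
  | ex φ => φ.alt.image (fun s => if s.head? = some true then s else true :: s)

/-- The degree of a formula: the maximal length of its alternation paths. -/
def degree (φ : Formula) : ℕ := φ.alt.sup List.length

/-- The class `U_k` (for `k ≥ 1`: degree `k` and all maximal paths begin with `-`;
`U_0` is the class of degree-`0` formulas). -/
def inU (k : ℕ) (φ : Formula) : Prop :=
  φ.degree = k ∧ ∀ s ∈ φ.alt, s.length = k → k = 0 ∨ s.head? = some false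

/-- The class `E_k` (for `k ≥ 1`: degree `k` and all maximal paths begin with `+`;
`E_0` is the class of degree-`0` formulas). -/
def inE (k : ℕ) (φ : Formula) : Prop :=
  φ.degree = k ∧ ∀ s ∈ φ.alt, s.length = k → k = 0 ∨ s.head? = some true

/-- The dual of a prenex formula: swap quantifiers and negate the matrix. -/
def dual : Formula → Formula
  | all φ => ex φ.dual
  | ex φ => all φ.dual
  | φ => φ.neg

/-- The `$`-translation (Ishihara's generalized negative translation). -/
def dollarTr : Formula → Formula
  | falsum => dollar
  | dollar => dollar
  | eq t u => (eq t u).negD.negD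
  | and φ ψ => and φ.dollarTr ψ.dollarTr
  | or φ ψ => (or φ.dollarTr ψ.dollarTr).negD.negD
  | imp φ ψ => imp φ.dollarTr ψ.dollarTr
  | all φ => all φ.dollarTr
  | ex φ => (ex φ.dollarTr).negD.negD

/-- The Friedman A-translation: replace every prime formula `P` (including `⊥`)
by `P ∨ *` (here `*` is the placeholder `dollar`). -/
def aTr : Formula → Formula
  | falsum => or falsum dollar
  | dollar => dollar
  | eq t u => or (eq t u) dollar
  | and φ ψ => and φ.aTr ψ.aTr
  | or φ ψ => or φ.aTr ψ.aTr
  | imp φ ψ => imp φ.aTr ψ.aTr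
  | all φ => all φ.aTr
  | ex φ => ex φ.aTr

/-- Prefix `n` universal quantifiers. -/
def allN : Formula → ℕ → Formula
  | φ, 0 => φ
  | φ, n + 1 => Formula.allN φ.all n

/-- The universal closure of a formula. -/
def univClosure (φ : Formula) : Formula := φ.allN (φ.fv.sup Nat.succ)

end Formula

mutual
  /-- The class `Σ_k` of prenex formulas. -/
  inductive IsSigma : ℕ → Formula → Prop
    | qf {φ : Formula} : φ.isQF → IsSigma 0 φ
    | ofPi {k : ℕ} {φ : Formula} : IsPi k φ → IsSigma (k + 1) φ
    | ex {k : ℕ} {φ : Formula} : IsSigma (k + 1) φ → IsSigma (k + 1) φ.ex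
  /-- The class `Π_k` of prenex formulas. -/
  inductive IsPi : ℕ → Formula → Prop
    | qf {φ : Formula} : φ.isQF → IsPi 0 φ
    | ofSigma {k : ℕ} {φ : Formula} : IsSigma k φ → IsPi (k + 1) φ
    | all {k : ℕ} {φ : Formula} : IsPi (k + 1) φ → IsPi (k + 1) φ.all
end

/-- Axioms of Heyting arithmetic `HA` (Hilbert style intuitionistic predicate logic
with equality, plus arithmetical axioms and the induction scheme). -/
inductive HAAx : Formula → Prop
  | axK (φ ψ : Formula) : HAAx (φ.imp (ψ.imp φ))
  | axS (φ ψ χ : Formula) : HAAx ((φ.imp (ψ.imp χ)).imp ((φ.imp ψ).imp (φ.imp χ)))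
  | andI (φ ψ : Formula) : HAAx (φ.imp (ψ.imp (φ.and ψ)))
  | andE1 (φ ψ : Formula) : HAAx ((φ.and ψ).imp φ)
  | andE2 (φ ψ : Formula) : HAAx ((φ.and ψ).imp ψ)
  | orI1 (φ ψ : Formula) : HAAx (φ.imp (φ.or ψ))
  | orI2 (φ ψ : Formula) : HAAx (ψ.imp (φ.or ψ))
  | orE (φ ψ χ : Formula) : HAAx ((φ.imp χ).imp ((ψ.imp χ).imp ((φ.or ψ).imp χ)))
  | efq (φ : Formula) : HAAx (Formula.falsum.imp φ)
  | allE (φ : Formula) (t : Term) : HAAx (φ.all.imp (φ.subst 0 t))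
  | exI (φ : Formula) (t : Term) : HAAx ((φ.subst 0 t).imp φ.ex)
  | allK (φ ψ : Formula) : HAAx ((φ.imp ψ).all.imp (φ.all.imp ψ.all))
  | allVac (φ : Formula) : HAAx (φ.imp (φ.lift 0).all)
  | exE (φ ψ : Formula) : HAAx ((φ.imp (ψ.lift 0)).all.imp (φ.ex.imp ψ))
  | eqRefl (t : Term) : HAAx (Formula.eq t t)
  | eqSubst (t u : Term) (φ : Formula) : HAAx ((Formula.eq t u).imp ((φ.subst 0 t).imp (φ.subst 0 u)))
  | succNeZero (t : Term) : HAAx (Formula.neg (Formula.eq (Term.succ t) Term.zero))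
  | succInj (t u : Term) : HAAx ((Formula.eq (Term.succ t) (Term.succ u)).imp (Formula.eq t u))
  | ind (φ : Formula) : HAAx ((φ.subst 0 Term.zero).imp
      ((((φ.imp (φ.repl 0 (Term.succ (Term.var 0))))).all).imp φ.all))
  | atomDec (t u : Term) : HAAx ((Formula.eq t u).or (Formula.eq t u).neg)

/-- Provability from `HA` (in the language possibly containing `$`)
together with the extra axioms `T`. -/
inductive Proves (T : Set Formula) : Formula → Prop
  | ax {φ : Formula} : φ ∈ T → Proves T φ
  | ha {φ : Formula} : HAAx φ → Proves T φ
  | mp {φ ψ : Formula} : Proves T (φ.imp ψ) → Proves T φ → Proves T ψ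
  | gen {φ : Formula} : Proves T φ → Proves T φ.all

/-- The scheme `Σ_k-LEM`. -/
def sigLEM (k : ℕ) : Set Formula := {ψ | ∃ φ : Formula, IsSigma k φ ∧ ψ = φ.or φ.neg}

/-- The full law of excluded middle for `HA`-formulas; `Proves lemSet` is `PA`-provability. -/
def lemSet : Set Formula := {ψ | ∃ φ : Formula, φ.noDollar ∧ ψ = φ.or φ.neg}

/-- The scheme `F_k-LEM`: excluded middle for `HA`-formulas of degree at most `k`. -/
def fLEM (k : ℕ) : Set Formula :=
  {ψ | ∃ φ : Formula, φ.noDollar ∧ φ.degree ≤ k ∧ ψ = φ.or φ.neg}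

/-- `T` is (the set of extra axioms of) a semi-classical arithmetic:
`HA ⊆ HA + T ⊆ PA`, i.e. all axioms are `HA`-formulas provable in `PA`. -/
def IsSemiClassical (T : Set Formula) : Prop :=
  ∀ φ ∈ T, φ.noDollar ∧ Proves lemSet φ

mutual
  /-- The class `ℛ_{k+1}` (index `k` denotes `ℛ_{k+1}`). -/
  inductive Rcl : ℕ → Formula → Prop
    | base {k : ℕ} {φ : Formula} : φ.degree ≤ k → φ.noDollar → Rcl k φ
    | and {k : ℕ} {φ ψ : Formula} : Rcl k φ → Rcl k ψ → Rcl k (φ.and ψ)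
    | or {k : ℕ} {φ ψ : Formula} : Rcl k φ → Rcl k ψ → Rcl k (φ.or ψ)
    | all {k : ℕ} {φ : Formula} : Rcl k φ → Rcl k φ.all
    | imp {k : ℕ} {φ ψ : Formula} : Jcl k φ → Rcl k ψ → Rcl k (φ.imp ψ)
  /-- The class `𝒥_{k+1}` (index `k` denotes `𝒥_{k+1}`). -/
  inductive Jcl : ℕ → Formula → Prop
    | base {k : ℕ} {φ : Formula} : φ.degree ≤ k → φ.noDollar → Jcl k φ
    | and {k : ℕ} {φ ψ : Formula} : Jcl k φ → Jcl k ψ → Jcl k (φ.and ψ)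
    | or {k : ℕ} {φ ψ : Formula} : Jcl k φ → Jcl k ψ → Jcl k (φ.or ψ)
    | ex {k : ℕ} {φ : Formula} : Jcl k φ → Jcl k φ.ex
    | imp {k : ℕ} {φ ψ : Formula} : Rcl k φ → Jcl k ψ → Jcl k (φ.imp ψ)
end

/-- The class `𝒬_{k+1}` (index `k` denotes `𝒬_{k+1}`): generated from prime formulas by
`∧, ∨, ∀, ∃` and implications `J → Q` with `J ∈ 𝒥_{k+1}`. -/
inductive Qcl : ℕ → Formula → Prop
  | falsum {k : ℕ} : Qcl k Formula.falsum
  | eq {k : ℕ} {t u : Term} : Qcl k (Formula.eq t u)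
  | and {k : ℕ} {φ ψ : Formula} : Qcl k φ → Qcl k ψ → Qcl k (φ.and ψ)
  | or {k : ℕ} {φ ψ : Formula} : Qcl k φ → Qcl k ψ → Qcl k (φ.or ψ)
  | all {k : ℕ} {φ : Formula} : Qcl k φ → Qcl k φ.all
  | ex {k : ℕ} {φ : Formula} : Qcl k φ → Qcl k φ.ex
  | imp {k : ℕ} {φ ψ : Formula} : Jcl k φ → Qcl k ψ → Qcl k (φ.imp ψ)

/-- The class `𝒱_{k+1}` (index `k` denotes `𝒱_{k+1}`): generated from `𝒥_{k+1}` by `∧, ∀`. -/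
inductive Vcl : ℕ → Formula → Prop
  | ofJ {k : ℕ} {φ : Formula} : Jcl k φ → Vcl k φ
  | and {k : ℕ} {φ ψ : Formula} : Vcl k φ → Vcl k ψ → Vcl k (φ.and ψ)
  | all {k : ℕ} {φ : Formula} : Vcl k φ → Vcl k φ.all

/-- The class `EΠ_k`: generated from `Π_k` formulas by `∨` and `∀`. -/
inductive EPi (k : ℕ) : Formula → Prop
  | ofPi {φ : Formula} : IsPi k φ → EPi k φ
  | or {φ ψ : Formula} : EPi k φ → EPi k ψ → EPi k (φ.or ψ)
  | all {φ : Formula} : EPi k φ → EPi k φ.all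

/-- The class `EΣ_{k+1}` (index `k` denotes `EΣ_{k+1}`): existential quantifications
of `EΠ_k` formulas. -/
inductive ESig (k : ℕ) : Formula → Prop
  | ofEPi {φ : Formula} : EPi k φ → ESig k φ
  | ex {φ : Formula} : ESig k φ → ESig k φ.ex

/-- The scheme `Γ-DNEC`: universal closure of `¬¬φ` implies universal closure of `φ`. -/
def dnecSet (Γ : Set Formula) : Set Formula :=
  {ψ | ∃ φ ∈ Γ, ψ = (φ.neg.neg.univClosure).imp φ.univClosure}

/-- The scheme `Γ-DNSC`: universal closure of `¬¬φ` implies `¬¬` of the universal closure. -/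
def dnscSet (Γ : Set Formula) : Set Formula :=
  {ψ | ∃ φ ∈ Γ, ψ = (φ.neg.neg.univClosure).imp φ.univClosure.neg.neg}

/-- Double-negation elimination for sentences in `Γ`. -/
def dneSentSet (Γ : Set Formula) : Set Formula :=
  {ψ | ∃ φ ∈ Γ, φ.sentence ∧ ψ = φ.neg.neg.imp φ}



/-! ### Auxiliary development -/

section Aux
open Formula

theorem Term.subst_lift (n : ℕ) (t : Term) : ∀ u, Term.subst n t (Term.lift n u) = u := by
  intro u
  induction u with
  | var m =>
      by_cases h : m < n
      · simp [Term.lift, Term.subst, h]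
      · have h1 : ¬ (m + 1 < n) := by omega
        have h2 : ¬ (m + 1 = n) := by omega
        simp [Term.lift, Term.subst, h, h1, h2]
  | func c a ts ih => simp only [Term.lift, Term.subst, ih]

theorem Formula.subst_lift (n : ℕ) (t : Term) (φ : Formula) :
    Formula.subst n t (Formula.lift n φ) = φ := by
  induction φ generalizing n t with
  | falsum => rfl
  | dollar => rfl
  | eq a b => simp [Formula.lift, Formula.subst, Term.subst_lift]
  | and φ ψ ihφ ihψ => simp [Formula.lift, Formula.subst, ihφ, ihψ]
  | or φ ψ ihφ ihψ => simp [Formula.lift, Formula.subst, ihφ, ihψ]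
  | imp φ ψ ihφ ihψ => simp [Formula.lift, Formula.subst, ihφ, ihψ]
  | all φ ih => simp [Formula.lift, Formula.subst, ih]
  | ex φ ih => simp [Formula.lift, Formula.subst, ih]

theorem Term.subst_var_lift (n : ℕ) : ∀ u, Term.subst n (Term.var n) (Term.lift (n+1) u) = u := by
  intro u
  induction u with
  | var m =>
      by_cases h : m < n + 1
      · by_cases h2 : m < n
        · simp [Term.lift, Term.subst, h, h2]
        · have h3 : m = n := by omega
          simp [Term.lift, Term.subst, h, h2, h3]
      · have h1 : ¬ (m + 1 < n) := by omega
        have h2 : ¬ (m + 1 = n) := by omega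
        simp [Term.lift, Term.subst, h, h1, h2, Nat.add_sub_cancel]
  | func c a ts ih => simp only [Term.lift, Term.subst, ih]

theorem Formula.subst_var_lift (n : ℕ) (φ : Formula) :
    Formula.subst n (Term.var n) (Formula.lift (n+1) φ) = φ := by
  induction φ generalizing n with
  | falsum => rfl
  | dollar => rfl
  | eq a b => simp [Formula.lift, Formula.subst, Term.subst_var_lift]
  | and φ ψ ihφ ihψ => simp [Formula.lift, Formula.subst, ihφ, ihψ]
  | or φ ψ ihφ ihψ => simp [Formula.lift, Formula.subst, ihφ, ihψ]
  | imp φ ψ ihφ ihψ => simp [Formula.lift, Formula.subst, ihφ, ihψ]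
  | all φ ih => simpa [Formula.lift, Formula.subst, Term.lift] using ih (n+1)
  | ex φ ih => simpa [Formula.lift, Formula.subst, Term.lift] using ih (n+1)

/-- Mutual induction principle for `IsSigma`/`IsPi`. -/
theorem sigma_pi_ind {motive_1 motive_2 : ℕ → Formula → Prop}
    (qf1 : ∀ {φ}, φ.isQF → motive_1 0 φ)
    (ofPi : ∀ {k φ}, IsPi k φ → motive_2 k φ → motive_1 (k+1) φ)
    (exI : ∀ {k φ}, IsSigma (k+1) φ → motive_1 (k+1) φ → motive_1 (k+1) φ.ex)
    (qf2 : ∀ {φ}, φ.isQF → motive_2 0 φ)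
    (ofSigma : ∀ {k φ}, IsSigma k φ → motive_1 k φ → motive_2 (k+1) φ)
    (allI : ∀ {k φ}, IsPi (k+1) φ → motive_2 (k+1) φ → motive_2 (k+1) φ.all) :
    (∀ {k φ}, IsSigma k φ → motive_1 k φ) ∧ (∀ {k φ}, IsPi k φ → motive_2 k φ) :=
  ⟨fun h => IsSigma.rec (motive_1 := fun k φ _ => motive_1 k φ)
      (motive_2 := fun k φ _ => motive_2 k φ) qf1 ofPi exI qf2 ofSigma allI h,
   fun h => IsPi.rec (motive_1 := fun k φ _ => motive_1 k φ)
      (motive_2 := fun k φ _ => motive_2 k φ) qf1 ofPi exI qf2 ofSigma allI h⟩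

theorem isQF_lift {φ : Formula} (h : φ.isQF) (d : ℕ) : (φ.lift d).isQF := by
  induction φ generalizing d with
  | falsum => trivial
  | dollar => exact h.elim
  | eq a b => trivial
  | and φ ψ ihφ ihψ => exact ⟨ihφ h.1 d, ihψ h.2 d⟩
  | or φ ψ ihφ ihψ => exact ⟨ihφ h.1 d, ihψ h.2 d⟩
  | imp φ ψ ihφ ihψ => exact ⟨ihφ h.1 d, ihψ h.2 d⟩
  | all φ ih => exact h.elim
  | ex φ ih => exact h.elim

theorem sigma_pi_lift :
    (∀ {k : ℕ} {φ : Formula}, IsSigma k φ → ∀ d, IsSigma k (φ.lift d)) ∧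
    (∀ {k : ℕ} {φ : Formula}, IsPi k φ → ∀ d, IsPi k (φ.lift d)) := by
  refine sigma_pi_ind ?_ ?_ ?_ ?_ ?_ ?_
  · exact fun h d => IsSigma.qf (isQF_lift h d)
  · exact fun _ ih d => IsSigma.ofPi (ih d)
  · exact fun _ ih d => IsSigma.ex (ih (d+1))
  · exact fun h d => IsPi.qf (isQF_lift h d)
  · exact fun _ ih d => IsPi.ofSigma (ih d)
  · exact fun _ ih d => IsPi.all (ih (d+1))

theorem IsSigma.lift {k : ℕ} {φ : Formula} (h : IsSigma k φ) (d : ℕ) : IsSigma k (φ.lift d) :=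
  sigma_pi_lift.1 h d

theorem IsPi.lift {k : ℕ} {φ : Formula} (h : IsPi k φ) (d : ℕ) : IsPi k (φ.lift d) :=
  sigma_pi_lift.2 h d

theorem sigma_pi_mono :
    (∀ {k : ℕ} {φ : Formula}, IsSigma k φ → ∀ k', k ≤ k' → IsSigma k' φ) ∧
    (∀ {k : ℕ} {φ : Formula}, IsPi k φ → ∀ k', k ≤ k' → IsPi k' φ) := by
  have key : ∀ n, (∀ {k : ℕ} {φ : Formula}, IsSigma k φ → ∀ k', k' ≤ n → k ≤ k' → IsSigma k' φ) ∧
      (∀ {k : ℕ} {φ : Formula}, IsPi k φ → ∀ k', k' ≤ n → k ≤ k' → IsPi k' φ) := by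
    intro n
    induction n with
    | zero =>
        constructor
        · intro k φ h k' hk' hk
          have : k' = 0 := by omega
          subst this
          have : k = 0 := by omega
          subst this
          exact h
        · intro k φ h k' hk' hk
          have : k' = 0 := by omega
          subst this
          have : k = 0 := by omega
          subst this
          exact h
    | succ n ihn =>
        refine sigma_pi_ind (motive_1 := fun k φ => ∀ k', k' ≤ n + 1 → k ≤ k' → IsSigma k' φ)
          (motive_2 := fun k φ => ∀ k', k' ≤ n + 1 → k ≤ k' → IsPi k' φ) ?_ ?_ ?_ ?_ ?_ ?_
        · intro φ hq k' _ _
          match k' with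
          | 0 => exact IsSigma.qf hq
          | k'+1 => exact IsSigma.ofPi (ihn.2 (IsPi.qf hq) k' (by omega) (by omega))
        · intro k φ hp ih k' hk' hk
          match k', hk with
          | k'+1, hk => exact IsSigma.ofPi (ihn.2 hp k' (by omega) (by omega))
        · intro k φ hs ih k' hk' hk
          match k', hk with
          | k'+1, hk => exact IsSigma.ex (ih (k'+1) hk' hk)
        · intro φ hq k' _ _
          match k' with
          | 0 => exact IsPi.qf hq
          | k'+1 => exact IsPi.ofSigma (ihn.1 (IsSigma.qf hq) k' (by omega) (by omega))
        · intro k φ hs ih k' hk' hk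
          match k', hk with
          | k'+1, hk => exact IsPi.ofSigma (ihn.1 hs k' (by omega) (by omega))
        · intro k φ hp ih k' hk' hk
          match k', hk with
          | k'+1, hk => exact IsPi.all (ih (k'+1) hk' hk)
  exact ⟨fun h k' hk => (key k').1 h k' le_rfl hk, fun h k' hk => (key k').2 h k' le_rfl hk⟩

theorem IsSigma.mono {k k' : ℕ} {φ : Formula} (h : IsSigma k φ) (hk : k ≤ k') : IsSigma k' φ :=
  sigma_pi_mono.1 h k' hk

theorem IsPi.mono {k k' : ℕ} {φ : Formula} (h : IsPi k φ) (hk : k ≤ k') : IsPi k' φ :=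
  sigma_pi_mono.2 h k' hk

end Aux


/-! ### A gen-free provability layer with a deduction theorem -/

section Prv
open Formula

/-- Provability without the generalization rule. -/
inductive Prv (T : Set Formula) : Formula → Prop
  | ax {φ : Formula} : φ ∈ T → Prv T φ
  | ha {φ : Formula} : HAAx φ → Prv T φ
  | mp {φ ψ : Formula} : Prv T (φ.imp ψ) → Prv T φ → Prv T ψ

theorem Prv.toProves {T : Set Formula} {φ : Formula} (h : Prv T φ) : Proves T φ := by
  induction h with
  | ax h => exact Proves.ax h
  | ha h => exact Proves.ha h
  | mp _ _ ih1 ih2 => exact Proves.mp ih1 ih2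

theorem Prv.mono {T T' : Set Formula} {φ : Formula} (h : Prv T φ) (hT : T ⊆ T') : Prv T' φ := by
  induction h with
  | ax h => exact Prv.ax (hT h)
  | ha h => exact Prv.ha h
  | mp _ _ ih1 ih2 => exact Prv.mp ih1 ih2

theorem Prv.id (T : Set Formula) (φ : Formula) : Prv T (φ.imp φ) :=
  Prv.mp (Prv.mp (Prv.ha (HAAx.axS φ (φ.imp φ) φ)) (Prv.ha (HAAx.axK φ (φ.imp φ))))
    (Prv.ha (HAAx.axK φ φ))

theorem Prv.ded {T : Set Formula} {χ φ : Formula} (h : Prv (insert χ T) φ) :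
    Prv T (χ.imp φ) := by
  induction h with
  | ax h =>
      rcases h with h | h
      · exact h ▸ Prv.id T χ
      · exact Prv.mp (Prv.ha (HAAx.axK _ χ)) (Prv.ax h)
  | ha h => exact Prv.mp (Prv.ha (HAAx.axK _ χ)) (Prv.ha h)
  | mp _ _ ih1 ih2 => exact Prv.mp (Prv.mp (Prv.ha (HAAx.axS χ _ _)) ih1) ih2

/-- The hypothesis rule. -/
theorem Prv.hyp {T : Set Formula} {φ : Formula} (h : φ ∈ insert φ T) : Prv (insert φ T) φ :=
  Prv.ax h

end Prv

section Toolkit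
open Formula

variable {T : Set Formula}

/-- Turn a `Prv ∅` tautology into `Proves T`. -/
theorem taut {φ : Formula} (h : Prv ∅ φ) : Proves T φ :=
  (h.mono (Set.empty_subset T)).toProves

theorem hyp0 {T : Set Formula} {φ : Formula} : Prv (insert φ T) φ :=
  Prv.ax (Set.mem_insert _ _)

theorem mem_insert2 {φ ψ : Formula} {T : Set Formula} : φ ∈ insert ψ (insert φ T) :=
  Set.mem_insert_iff.mpr (Or.inr (Set.mem_insert _ _))

theorem mem_insert3 {φ ψ χ : Formula} {T : Set Formula} :
    φ ∈ insert ψ (insert χ (insert φ T)) :=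
  Set.mem_insert_iff.mpr (Or.inr mem_insert2)

theorem mem_insert4 {φ ψ χ ρ : Formula} {T : Set Formula} :
    φ ∈ insert ψ (insert χ (insert ρ (insert φ T))) :=
  Set.mem_insert_iff.mpr (Or.inr mem_insert3)

theorem hyp1 {T : Set Formula} {φ ψ : Formula} : Prv (insert ψ (insert φ T)) φ :=
  Prv.ax mem_insert2
theorem hyp2 {T : Set Formula} {φ ψ χ : Formula} : Prv (insert χ (insert ψ (insert φ T))) φ :=
  Prv.ax mem_insert3
theorem hyp3 {T : Set Formula} {φ ψ χ ρ : Formula} :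
    Prv (insert ρ (insert χ (insert ψ (insert φ T)))) φ :=
  Prv.ax mem_insert4

theorem P.id (φ : Formula) : Proves T (φ.imp φ) := taut (Prv.id _ _)

theorem P.mp2 {a b c : Formula} (h : Proves T (a.imp (b.imp c)))
    (h1 : Proves T a) (h2 : Proves T b) : Proves T c :=
  (h.mp h1).mp h2

theorem P.mp3 {a b c d : Formula} (h : Proves T (a.imp (b.imp (c.imp d))))
    (h1 : Proves T a) (h2 : Proves T b) (h3 : Proves T c) : Proves T d :=
  ((h.mp h1).mp h2).mp h3

/-- From ⊢a→b and ⊢b→c conclude ⊢a→c. -/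
theorem P.syl {a b c : Formula} (h1 : Proves T (a.imp b)) (h2 : Proves T (b.imp c)) :
    Proves T (a.imp c) := by
  have t : Proves T ((a.imp b).imp ((b.imp c).imp (a.imp c))) := by
    refine taut (Prv.ded (Prv.ded (Prv.ded ?_)))
    exact Prv.mp hyp1 (Prv.mp hyp2 hyp0)
  exact P.mp2 t h1 h2

/-- S combinator as rule. -/
theorem P.syld {a b c : Formula} (h1 : Proves T (a.imp (b.imp c)))
    (h2 : Proves T (a.imp b)) : Proves T (a.imp c) :=
  P.mp2 (Proves.ha (HAAx.axS a b c)) h1 h2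

theorem P.const {a : Formula} (b : Formula) (h : Proves T a) : Proves T (b.imp a) :=
  (Proves.ha (HAAx.axK a b)).mp h

/-- swap: from ⊢a→(b→c) conclude ⊢b→(a→c). -/
theorem P.swap {a b c : Formula} (h : Proves T (a.imp (b.imp c))) :
    Proves T (b.imp (a.imp c)) := by
  have t : Proves T ((a.imp (b.imp c)).imp (b.imp (a.imp c))) := by
    refine taut (Prv.ded (Prv.ded (Prv.ded ?_)))
    exact Prv.mp (Prv.mp hyp2 hyp0) hyp1
  exact t.mp h

theorem P.andI {a b : Formula} (h1 : Proves T a) (h2 : Proves T b) : Proves T (a.and b) :=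
  P.mp2 (Proves.ha (HAAx.andI a b)) h1 h2

theorem P.andL {a b : Formula} (h : Proves T (a.and b)) : Proves T a :=
  (Proves.ha (HAAx.andE1 a b)).mp h

theorem P.andR {a b : Formula} (h : Proves T (a.and b)) : Proves T b :=
  (Proves.ha (HAAx.andE2 a b)).mp h

theorem P.orI1 {a : Formula} (b : Formula) (h : Proves T a) : Proves T (a.or b) :=
  (Proves.ha (HAAx.orI1 a b)).mp h

theorem P.orI2 {b : Formula} (a : Formula) (h : Proves T b) : Proves T (a.or b) :=
  (Proves.ha (HAAx.orI2 a b)).mp h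

/-- case analysis rule. -/
theorem P.cases {a b c : Formula} (h : Proves T (a.or b)) (h1 : Proves T (a.imp c))
    (h2 : Proves T (b.imp c)) : Proves T c :=
  (P.mp2 (Proves.ha (HAAx.orE a b c)) h1 h2).mp h

theorem P.efq (φ : Formula) : Proves T (Formula.falsum.imp φ) := Proves.ha (HAAx.efq φ)

/-- ⊢ a → ¬a → b. -/
theorem P.contr {a b : Formula} : Proves T (a.imp (a.neg.imp b)) := by
  refine taut (Prv.ded (Prv.ded ?_))
  exact Prv.mp (Prv.ha (HAAx.efq _)) (Prv.mp hyp0 hyp1)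

/-- ⊢ a → ¬¬a. -/
theorem P.dni {a : Formula} : Proves T (a.imp a.neg.neg) := P.swap (P.id a.neg)

/-- contraposition rule: from ⊢a→b conclude ⊢¬b→¬a. -/
theorem P.contra {a b : Formula} (h : Proves T (a.imp b)) : Proves T (b.neg.imp a.neg) := by
  refine P.swap ?_
  exact P.syl h (P.swap (P.id b.neg))

/-- ¬¬ functor rule: from ⊢a→b conclude ⊢¬¬a→¬¬b. -/
theorem P.dnMap {a b : Formula} (h : Proves T (a.imp b)) :
    Proves T (a.neg.neg.imp b.neg.neg) := P.contra (P.contra h)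

theorem P.iffI {a b : Formula} (h1 : Proves T (a.imp b)) (h2 : Proves T (b.imp a)) :
    Proves T (a.iff b) := P.andI h1 h2

theorem P.iffL {a b : Formula} (h : Proves T (a.iff b)) : Proves T (a.imp b) := P.andL h
theorem P.iffR {a b : Formula} (h : Proves T (a.iff b)) : Proves T (b.imp a) := P.andR h

theorem P.iffRefl (a : Formula) : Proves T (a.iff a) := P.iffI (P.id a) (P.id a)

theorem P.iffSymm {a b : Formula} (h : Proves T (a.iff b)) : Proves T (b.iff a) :=
  P.iffI (P.iffR h) (P.iffL h)

theorem P.iffTrans {a b c : Formula} (h1 : Proves T (a.iff b)) (h2 : Proves T (b.iff c)) :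
    Proves T (a.iff c) :=
  P.iffI (P.syl (P.iffL h1) (P.iffL h2)) (P.syl (P.iffR h2) (P.iffR h1))

theorem P.andCongr {a b a' b' : Formula} (h1 : Proves T (a.iff a')) (h2 : Proves T (b.iff b')) :
    Proves T ((a.and b).iff (a'.and b')) := by
  have dir : ∀ {x y x' y' : Formula}, Proves T (x.imp x') → Proves T (y.imp y') →
      Proves T ((x.and y).imp (x'.and y')) := by
    intro x y x' y' hx hy
    refine P.syld (P.syl (P.syl (Proves.ha (HAAx.andE1 x y)) hx) (Proves.ha (HAAx.andI x' y')))
      (P.syl (Proves.ha (HAAx.andE2 x y)) hy)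
  exact P.iffI (dir (P.iffL h1) (P.iffL h2)) (dir (P.iffR h1) (P.iffR h2))

theorem P.orCongr {a b a' b' : Formula} (h1 : Proves T (a.iff a')) (h2 : Proves T (b.iff b')) :
    Proves T ((a.or b).iff (a'.or b')) := by
  have dir : ∀ {x y x' y' : Formula}, Proves T (x.imp x') → Proves T (y.imp y') →
      Proves T ((x.or y).imp (x'.or y')) := by
    intro x y x' y' hx hy
    exact P.mp2 (Proves.ha (HAAx.orE x y (x'.or y')))
      (P.syl hx (Proves.ha (HAAx.orI1 x' y'))) (P.syl hy (Proves.ha (HAAx.orI2 x' y')))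
  exact P.iffI (dir (P.iffL h1) (P.iffL h2)) (dir (P.iffR h1) (P.iffR h2))

theorem P.impCongr {a b a' b' : Formula} (h1 : Proves T (a.iff a')) (h2 : Proves T (b.iff b')) :
    Proves T ((a.imp b).iff (a'.imp b')) := by
  have dir : ∀ {x y x' y' : Formula}, Proves T (x'.imp x) → Proves T (y.imp y') →
      Proves T ((x.imp y).imp (x'.imp y')) := by
    intro x y x' y' hx hy
    have t : Proves T ((x'.imp x).imp ((y.imp y').imp ((x.imp y).imp (x'.imp y')))) := by
      refine taut (Prv.ded (Prv.ded (Prv.ded (Prv.ded ?_))))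
      exact Prv.mp hyp2 (Prv.mp hyp1 (Prv.mp (Prv.ax mem_insert4) hyp0))
    exact P.mp2 t hx hy
  exact P.iffI (dir (P.iffR h1) (P.iffL h2)) (dir (P.iffL h1) (P.iffR h2))

theorem P.negCongr {a a' : Formula} (h : Proves T (a.iff a')) :
    Proves T (a.neg.iff a'.neg) := P.impCongr h (P.iffRefl Formula.falsum)

/-- transfer LEM along an iff. -/
theorem P.lemTransfer {a b : Formula} (hiff : Proves T (a.iff b))
    (h : Proves T (b.or b.neg)) : Proves T (a.or a.neg) := by
  refine P.cases h ?_ ?_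
  · exact P.syl (P.iffR hiff) (Proves.ha (HAAx.orI1 _ _))
  · exact P.syl (P.contra (P.iffL hiff)) (Proves.ha (HAAx.orI2 _ _))

/-- LEM gives DNE. -/
theorem P.lemDne {a : Formula} (h : Proves T (a.or a.neg)) : Proves T (a.neg.neg.imp a) := by
  refine P.cases h ?_ ?_
  · exact Proves.ha (HAAx.axK a a.neg.neg)
  · exact P.contr

end Toolkit

section Quant
open Formula

variable {T : Set Formula}

/-- from ⊢a→b conclude ⊢∀a→∀b. -/
theorem P.allMono {a b : Formula} (h : Proves T (a.imp b)) : Proves T (a.all.imp b.all) :=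
  (Proves.ha (HAAx.allK a b)).mp (Proves.gen h)

theorem P.allCongr {a b : Formula} (h : Proves T (a.iff b)) : Proves T (a.all.iff b.all) :=
  P.iffI (P.allMono (P.iffL h)) (P.allMono (P.iffR h))

/-- ⊢ a → ∃x. a↑ (where a↑ lifts above the new binder). -/
theorem P.exVar (a : Formula) : Proves T (a.imp (a.lift 1).ex) := by
  have := Proves.ha (T := T) (HAAx.exI (a.lift 1) (Term.var 0))
  rwa [Formula.subst_var_lift] at this

/-- ⊢ (∀x. a↑) → a. -/
theorem P.allPeel (a : Formula) : Proves T ((a.lift 1).all.imp a) := by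
  have := Proves.ha (T := T) (HAAx.allE (a.lift 1) (Term.var 0))
  rwa [Formula.subst_var_lift] at this

/-- ⊢ ∀a → a[t]. -/
theorem P.allInst (a : Formula) (t : Term) : Proves T (a.all.imp (a.subst 0 t)) :=
  Proves.ha (HAAx.allE a t)

/-- ⊢ a[t] → ∃a. -/
theorem P.exInst (a : Formula) (t : Term) : Proves T ((a.subst 0 t).imp a.ex) :=
  Proves.ha (HAAx.exI a t)

/-- ⊢ (∀x. a↑0) → a (vacuous). -/
theorem P.allVacPeel (a : Formula) : Proves T ((a.lift 0).all.imp a) := by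
  have := Proves.ha (T := T) (HAAx.allE (a.lift 0) Term.zero)
  rwa [Formula.subst_lift] at this

/-- ⊢ a → ∃x. a↑0 (vacuous). -/
theorem P.exVac (a : Formula) : Proves T (a.imp (a.lift 0).ex) := by
  have := Proves.ha (T := T) (HAAx.exI (a.lift 0) Term.zero)
  rwa [Formula.subst_lift] at this

/-- from ⊢a→b conclude ⊢∃a→∃b. -/
theorem P.exMono {a b : Formula} (h : Proves T (a.imp b)) : Proves T (a.ex.imp b.ex) :=
  (Proves.ha (HAAx.exE a b.ex)).mp (Proves.gen (P.syl h (P.exVar b)))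

theorem P.exCongr {a b : Formula} (h : Proves T (a.iff b)) : Proves T (a.ex.iff b.ex) :=
  P.iffI (P.exMono (P.iffL h)) (P.exMono (P.iffR h))

/-- from ⊢a↑→b conclude ⊢a→∀b. -/
theorem P.impAll {a b : Formula} (h : Proves T ((a.lift 0).imp b)) :
    Proves T (a.imp b.all) :=
  P.syl (Proves.ha (HAAx.allVac a)) ((Proves.ha (HAAx.allK (a.lift 0) b)).mp (Proves.gen h))

/-- from ⊢a→b↑ conclude ⊢∃a→b. -/
theorem P.exElim {a b : Formula} (h : Proves T (a.imp (b.lift 0))) :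
    Proves T (a.ex.imp b) :=
  (Proves.ha (HAAx.exE a b)).mp (Proves.gen h)

/-- ⊢ ¬∃a ↔ ∀¬a. -/
theorem P.negEx (a : Formula) : Proves T ((a.ex.neg).iff (a.neg.all)) := by
  refine P.iffI ?_ ?_
  · exact P.impAll (P.contra (P.exVar a))
  · refine P.swap (P.exElim ?_)
    show Proves T (a.imp (((a.neg.all).imp Formula.falsum).lift 0))
    have peel : Proves T (((a.neg.all).lift 0).imp a.neg) := by
      have := Proves.ha (T := T) (HAAx.allE ((a.neg).lift 1) (Term.var 0))
      rw [Formula.subst_var_lift] at this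
      exact this
    exact P.swap peel

end Quant


section Device
open Formula

/-- The deductive closure of `T` as a set of formulas. -/
def thy (T : Set Formula) : Set Formula := {φ | Proves T φ}

variable {T : Set Formula}

theorem P.ofPrv {φ : Formula} (h : Prv (thy T) φ) : Proves T φ := by
  induction h with
  | ax h => exact h
  | ha h => exact Proves.ha h
  | mp _ _ ih1 ih2 => exact Proves.mp ih1 ih2

/-- Deduction with one hypothesis. -/
theorem P.ded1 {x y : Formula} (h : Prv (insert x (thy T)) y) : Proves T (x.imp y) :=
  P.ofPrv (Prv.ded h)

theorem P.ded2 {x1 x0 y : Formula} (h : Prv (insert x0 (insert x1 (thy T))) y) :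
    Proves T (x1.imp (x0.imp y)) := P.ofPrv (Prv.ded (Prv.ded h))

theorem P.ded3 {x2 x1 x0 y : Formula} (h : Prv (insert x0 (insert x1 (insert x2 (thy T)))) y) :
    Proves T (x2.imp (x1.imp (x0.imp y))) := P.ofPrv (Prv.ded (Prv.ded (Prv.ded h)))

/-- Cite an ambient theorem inside a `Prv` derivation. -/
theorem Prv.thm {S : Set Formula} {φ : Formula} (hsub : thy T ⊆ S) (h : Proves T φ) :
    Prv S φ := Prv.ax (hsub h)

theorem sub1 {x : Formula} : thy T ⊆ insert x (thy T) := Set.subset_insert _ _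
theorem sub2 {x0 x1 : Formula} : thy T ⊆ insert x0 (insert x1 (thy T)) :=
  Set.Subset.trans sub1 (Set.subset_insert _ _)
theorem sub3 {x0 x1 x2 : Formula} : thy T ⊆ insert x0 (insert x1 (insert x2 (thy T))) :=
  Set.Subset.trans sub2 (Set.subset_insert _ _)

theorem P.curry {x y z : Formula} (h : Proves T ((x.and y).imp z)) :
    Proves T (x.imp (y.imp z)) := by
  refine P.ded2 ?_
  exact Prv.mp (Prv.thm sub2 h) (Prv.mp (Prv.mp (Prv.ha (HAAx.andI x y)) hyp1) hyp0)

theorem P.uncurry {x y z : Formula} (h : Proves T (x.imp (y.imp z))) :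
    Proves T ((x.and y).imp z) := by
  refine P.ded1 ?_
  refine Prv.mp (Prv.mp (Prv.thm sub1 h) ?_) ?_
  · exact Prv.mp (Prv.ha (HAAx.andE1 x y)) hyp0
  · exact Prv.mp (Prv.ha (HAAx.andE2 x y)) hyp0

theorem P.impMap {x y x' y' : Formula} (hx : Proves T (x'.imp x)) (hy : Proves T (y.imp y')) :
    Proves T ((x.imp y).imp (x'.imp y')) := by
  refine P.ded2 ?_
  exact Prv.mp (Prv.thm sub2 hy) (Prv.mp hyp1 (Prv.mp (Prv.thm sub2 hx) hyp0))

end Device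

section Pull
open Formula

variable {T : Set Formula}

theorem P.andComm (a b : Formula) : Proves T ((a.and b).iff (b.and a)) := by
  have dir : ∀ x y : Formula, Proves T ((x.and y).imp (y.and x)) := by
    intro x y
    refine P.ded1 ?_
    exact Prv.mp (Prv.mp (Prv.ha (HAAx.andI y x)) (Prv.mp (Prv.ha (HAAx.andE2 x y)) hyp0))
      (Prv.mp (Prv.ha (HAAx.andE1 x y)) hyp0)
  exact P.iffI (dir a b) (dir b a)

theorem P.orComm (a b : Formula) : Proves T ((a.or b).iff (b.or a)) := by
  have dir : ∀ x y : Formula, Proves T ((x.or y).imp (y.or x)) := fun x y =>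
    P.mp2 (Proves.ha (HAAx.orE x y (y.or x))) (Proves.ha (HAAx.orI2 y x)) (Proves.ha (HAAx.orI1 y x))
  exact P.iffI (dir a b) (dir b a)

/-- ⊢ (∃a) ∧ b ↔ ∃(a ∧ b↑). -/
theorem P.pullExAndL (a b : Formula) :
    Proves T (((a.ex).and b).iff ((a.and (b.lift 0)).ex)) := by
  refine P.iffI ?_ ?_
  · refine P.uncurry (P.exElim ?_)
    show Proves T (a.imp ((b.lift 0).imp ((a.and (b.lift 0)).ex.lift 0)))
    refine P.ded2 ?_
    refine Prv.mp (Prv.thm sub2 (P.exVar (a.and (b.lift 0)))) ?_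
    exact Prv.mp (Prv.mp (Prv.ha (HAAx.andI _ _)) hyp1) hyp0
  · refine P.exElim ?_
    show Proves T ((a.and (b.lift 0)).imp ((a.ex.and b).lift 0))
    refine P.ded1 ?_
    refine Prv.mp (Prv.mp (Prv.ha (HAAx.andI _ _)) ?_) ?_
    · exact Prv.mp (Prv.thm sub1 (P.exVar a)) (Prv.mp (Prv.ha (HAAx.andE1 _ _)) hyp0)
    · exact Prv.mp (Prv.ha (HAAx.andE2 _ _)) hyp0

/-- ⊢ a ∧ (∃b) ↔ ∃(a↑ ∧ b). -/
theorem P.pullExAndR (a b : Formula) :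
    Proves T ((a.and (b.ex)).iff (((a.lift 0).and b).ex)) := by
  refine P.iffTrans (P.andComm a b.ex) (P.iffTrans (P.pullExAndL b a) (P.exCongr ?_))
  exact P.andComm b (a.lift 0)

/-- ⊢ (∀a) ∧ b ↔ ∀(a ∧ b↑). -/
theorem P.pullAllAndL (a b : Formula) :
    Proves T (((a.all).and b).iff ((a.and (b.lift 0)).all)) := by
  refine P.iffI ?_ ?_
  · refine P.impAll ?_
    show Proves T (((a.lift 1).all.and (b.lift 0)).imp (a.and (b.lift 0)))
    refine P.ded1 ?_
    refine Prv.mp (Prv.mp (Prv.ha (HAAx.andI _ _)) ?_) (Prv.mp (Prv.ha (HAAx.andE2 _ _)) hyp0)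
    exact Prv.mp (Prv.thm sub1 (P.allPeel a)) (Prv.mp (Prv.ha (HAAx.andE1 _ _)) hyp0)
  · refine P.ded1 ?_
    refine Prv.mp (Prv.mp (Prv.ha (HAAx.andI _ _)) ?_) ?_
    · exact Prv.mp (Prv.thm sub1 (P.allMono (Proves.ha (HAAx.andE1 a (b.lift 0))))) hyp0
    · refine Prv.mp (Prv.thm sub1 (P.syl (P.allMono (Proves.ha (HAAx.andE2 a (b.lift 0))))
        (P.allVacPeel b))) hyp0

/-- ⊢ a ∧ (∀b) ↔ ∀(a↑ ∧ b). -/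
theorem P.pullAllAndR (a b : Formula) :
    Proves T ((a.and (b.all)).iff (((a.lift 0).and b).all)) := by
  refine P.iffTrans (P.andComm a b.all) (P.iffTrans (P.pullAllAndL b a) (P.allCongr ?_))
  exact P.andComm b (a.lift 0)

/-- ⊢ (∃a) ∨ b ↔ ∃(a ∨ b↑). -/
theorem P.pullExOrL (a b : Formula) :
    Proves T (((a.ex).or b).iff ((a.or (b.lift 0)).ex)) := by
  refine P.iffI ?_ ?_
  · refine P.mp2 (Proves.ha (HAAx.orE a.ex b _)) ?_ ?_
    · exact P.exMono (Proves.ha (HAAx.orI1 a (b.lift 0)))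
    · have h1 : Proves T (b.imp ((a.subst 0 Term.zero).or b)) :=
        Proves.ha (HAAx.orI2 (a.subst 0 Term.zero) b)
      have h2 : Proves T (((a.or (b.lift 0)).subst 0 Term.zero).imp ((a.or (b.lift 0)).ex)) :=
        Proves.ha (HAAx.exI (a.or (b.lift 0)) Term.zero)
      rw [show (a.or (b.lift 0)).subst 0 Term.zero
            = (a.subst 0 Term.zero).or b by
          simp [Formula.subst, Formula.subst_lift]] at h2
      exact P.syl h1 h2
  · refine P.exElim ?_
    show Proves T ((a.or (b.lift 0)).imp ((a.lift 1).ex.or (b.lift 0)))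
    refine P.mp2 (Proves.ha (HAAx.orE a (b.lift 0) _)) ?_ ?_
    · exact P.syl (P.exVar a) (Proves.ha (HAAx.orI1 _ _))
    · exact Proves.ha (HAAx.orI2 _ _)

/-- ⊢ a ∨ (∃b) ↔ ∃(a↑ ∨ b). -/
theorem P.pullExOrR (a b : Formula) :
    Proves T ((a.or (b.ex)).iff (((a.lift 0).or b).ex)) := by
  refine P.iffTrans (P.orComm a b.ex) (P.iffTrans (P.pullExOrL b a) (P.exCongr ?_))
  exact P.orComm b (a.lift 0)

/-- ⊢ (∀a) ∨ b ↔ ∀(a ∨ b↑), given LEM for b. -/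
theorem P.pullAllOrL (a b : Formula) (hlem : Proves T (b.or b.neg)) :
    Proves T (((a.all).or b).iff ((a.or (b.lift 0)).all)) := by
  refine P.iffI ?_ ?_
  · refine P.impAll ?_
    show Proves T (((a.lift 1).all.or (b.lift 0)).imp (a.or (b.lift 0)))
    refine P.mp2 (Proves.ha (HAAx.orE _ _ _)) ?_ (Proves.ha (HAAx.orI2 _ _))
    exact P.syl (P.allPeel a) (Proves.ha (HAAx.orI1 _ _))
  · refine P.cases hlem ?_ ?_
    · exact P.syl (Proves.ha (HAAx.orI2 a.all b)) (Proves.ha (HAAx.axK _ _))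
    · -- from ¬b: ∀(a ∨ b↑) → ∀a
      have key : Proves T ((b.neg.and ((a.or (b.lift 0)).all)).imp a.all) := by
        refine P.impAll ?_
        show Proves T ((((b.lift 0).neg).and (((a.or (b.lift 0)).lift 1).all)).imp a)
        refine P.ded1 ?_
        have h1 : Prv (insert (((b.lift 0).neg).and (((a.or (b.lift 0)).lift 1).all)) (thy T))
            (a.or (b.lift 0)) :=
          Prv.mp (Prv.thm sub1 (P.allPeel (a.or (b.lift 0))))
            (Prv.mp (Prv.ha (HAAx.andE2 _ _)) hyp0)
        refine Prv.mp (Prv.mp (Prv.mp (Prv.ha (HAAx.orE a (b.lift 0) a))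
          (Prv.thm sub1 (P.id a))) ?_) h1
        · refine Prv.ded ?_
          refine Prv.mp (Prv.ha (HAAx.efq a)) ?_
          exact Prv.mp (Prv.mp (Prv.ha (HAAx.andE1 _ _)) hyp1) hyp0
      refine P.ded2 ?_
      refine Prv.mp (Prv.thm sub2 (Proves.ha (HAAx.orI1 a.all b))) ?_
      exact Prv.mp (Prv.thm sub2 key) (Prv.mp (Prv.mp (Prv.ha (HAAx.andI _ _)) hyp1) hyp0)

/-- ⊢ a ∨ (∀b) ↔ ∀(a↑ ∨ b), given LEM for a. -/
theorem P.pullAllOrR (a b : Formula) (hlem : Proves T (a.or a.neg)) :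
    Proves T ((a.or (b.all)).iff (((a.lift 0).or b).all)) := by
  refine P.iffTrans (P.orComm a b.all) (P.iffTrans (P.pullAllOrL b a hlem) (P.allCongr ?_))
  exact P.orComm b (a.lift 0)

/-- ⊢ ((∃a) → b) ↔ ∀(a → b↑). -/
theorem P.pullExImpL (a b : Formula) :
    Proves T (((a.ex).imp b).iff ((a.imp (b.lift 0)).all)) := by
  refine P.iffI ?_ ?_
  · refine P.impAll ?_
    show Proves T (((a.lift 1).ex.imp (b.lift 0)).imp (a.imp (b.lift 0)))
    exact P.impMap (P.exVar a) (P.id _)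
  · refine P.swap (P.exElim ?_)
    show Proves T (a.imp (((a.imp (b.lift 0)).all.imp b).lift 0))
    show Proves T (a.imp (((a.imp (b.lift 0)).lift 1).all.imp (b.lift 0)))
    exact P.swap (P.allPeel (a.imp (b.lift 0)))

/-- ⊢ (b → ∀a) ↔ ∀(b↑ → a). -/
theorem P.pullAllImpR (a b : Formula) :
    Proves T ((b.imp (a.all)).iff (((b.lift 0).imp a).all)) := by
  refine P.iffI ?_ ?_
  · refine P.impAll ?_
    show Proves T (((b.lift 0).imp ((a.lift 1).all)).imp ((b.lift 0).imp a))
    exact P.impMap (P.id _) (P.allPeel a)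
  · refine P.ded2 ?_
    refine Prv.mp (Prv.mp (Prv.thm sub2 (Proves.ha (HAAx.allK (b.lift 0) a))) hyp1) ?_
    exact Prv.mp (Prv.thm sub2 (Proves.ha (HAAx.allVac b))) hyp0

/-- ⊢ (b → ∃a) ↔ ∃(b↑ → a), given LEM for b. -/
theorem P.pullExImpR (a b : Formula) (hlem : Proves T (b.or b.neg)) :
    Proves T ((b.imp (a.ex)).iff (((b.lift 0).imp a).ex)) := by
  refine P.iffI ?_ ?_
  · refine P.cases hlem ?_ ?_
    · -- from b : (b → ∃a) → ∃(b↑ → a)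
      have m : Proves T (a.ex.imp (((b.lift 0).imp a).ex)) :=
        P.exMono (Proves.ha (HAAx.axK a (b.lift 0)))
      refine P.ded2 ?_
      exact Prv.mp (Prv.thm sub2 m) (Prv.mp hyp0 hyp1)
    · -- from ¬b : anything → ∃(b↑ → a), witness zero
      have h2 : Proves T ((((b.lift 0).imp a).subst 0 Term.zero).imp (((b.lift 0).imp a).ex)) :=
        Proves.ha (HAAx.exI ((b.lift 0).imp a) Term.zero)
      rw [show ((b.lift 0).imp a).subst 0 Term.zero = b.imp (a.subst 0 Term.zero) by
        simp [Formula.subst, Formula.subst_lift]] at h2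
      refine P.ded2 ?_
      refine Prv.mp (Prv.thm sub2 h2) ?_
      refine Prv.ded ?_
      refine Prv.mp (Prv.ha (HAAx.efq _)) ?_
      exact Prv.mp hyp2 hyp0
  · refine P.exElim ?_
    show Proves T (((b.lift 0).imp a).imp ((b.lift 0).imp ((a.lift 1).ex)))
    exact P.impMap (P.id _) (P.exVar a)

end Pull


section Paths
open Formula

/-- `E_k^+`: all alternation paths have length ≤ k, and those headed by `-` have length < k. -/
def inEp (k : ℕ) (φ : Formula) : Prop :=
  ∀ s ∈ φ.alt, s.length ≤ k ∧ (s.head? = some false → s.length < k)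

/-- `U_k^+`: all alternation paths have length ≤ k, and those headed by `+` have length < k. -/
def inUp (k : ℕ) (φ : Formula) : Prop :=
  ∀ s ∈ φ.alt, s.length ≤ k ∧ (s.head? = some true → s.length < k)

theorem alt_nonempty (φ : Formula) : φ.alt.Nonempty := by
  induction φ with
  | falsum => exact ⟨[], Finset.mem_singleton_self _⟩
  | dollar => exact ⟨[], Finset.mem_singleton_self _⟩
  | eq t u => exact ⟨[], Finset.mem_singleton_self _⟩
  | and φ ψ ihφ ihψ => exact ihφ.mono Finset.subset_union_left
  | or φ ψ ihφ ihψ => exact ihφ.mono Finset.subset_union_left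
  | imp φ ψ ihφ ihψ => exact ihψ.mono Finset.subset_union_right
  | all φ ih => exact ih.image _
  | ex φ ih => exact ih.image _

theorem pflip_length (s : List Bool) : (pflip s).length = s.length := List.length_map _

theorem pflip_head? (s : List Bool) : (pflip s).head? = s.head?.map (!·) := by
  cases s <;> simp [pflip]

theorem degree_le_iff {φ : Formula} {k : ℕ} :
    φ.degree ≤ k ↔ ∀ s ∈ φ.alt, s.length ≤ k := by
  simp [Formula.degree, Finset.sup_le_iff]

theorem inEp_mono {k k' : ℕ} {φ : Formula} (h : inEp k φ) (hk : k ≤ k') : inEp k' φ :=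
  fun s hs => ⟨le_trans (h s hs).1 hk, fun hh => lt_of_lt_of_le ((h s hs).2 hh) hk⟩

theorem inUp_mono {k k' : ℕ} {φ : Formula} (h : inUp k φ) (hk : k ≤ k') : inUp k' φ :=
  fun s hs => ⟨le_trans (h s hs).1 hk, fun hh => lt_of_lt_of_le ((h s hs).2 hh) hk⟩

theorem isQF_alt {φ : Formula} (h : φ.isQF) : φ.alt = {([] : List Bool)} := by
  induction φ with
  | falsum => rfl
  | dollar => exact h.elim
  | eq t u => rfl
  | and φ ψ ihφ ihψ => show φ.alt ∪ ψ.alt = _ ; rw [ihφ h.1, ihψ h.2]; rfl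
  | or φ ψ ihφ ihψ => show φ.alt ∪ ψ.alt = _ ; rw [ihφ h.1, ihψ h.2]; rfl
  | imp φ ψ ihφ ihψ =>
      show φ.alt.image pflip ∪ ψ.alt = _
      rw [ihφ h.1, ihψ h.2]
      rfl
  | all φ ih => exact h.elim
  | ex φ ih => exact h.elim

theorem isQF_inEp {φ : Formula} (h : φ.isQF) (k : ℕ) : inEp k φ := by
  intro s hs
  rw [isQF_alt h, Finset.mem_singleton] at hs
  subst hs
  simp

theorem isQF_inUp {φ : Formula} (h : φ.isQF) (k : ℕ) : inUp k φ := by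
  intro s hs
  rw [isQF_alt h, Finset.mem_singleton] at hs
  subst hs
  simp

theorem inEp_degree_le {k : ℕ} {φ : Formula} (h : inEp k φ) : φ.degree ≤ k :=
  degree_le_iff.mpr fun s hs => (h s hs).1

theorem inUp_degree_le {k : ℕ} {φ : Formula} (h : inUp k φ) : φ.degree ≤ k :=
  degree_le_iff.mpr fun s hs => (h s hs).1

/-- Σ_k formulas lie in `E_k^+`, Π_k in `U_k^+`. -/
theorem sigma_pi_path :
    (∀ {k : ℕ} {φ : Formula}, IsSigma k φ → inEp k φ) ∧
    (∀ {k : ℕ} {φ : Formula}, IsPi k φ → inUp k φ) := by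
  refine sigma_pi_ind ?_ ?_ ?_ ?_ ?_ ?_
  · exact fun h => isQF_inEp h 0
  · exact fun _ ih s hs => ⟨le_trans (ih s hs).1 (Nat.le_succ _),
      fun hh => Nat.lt_succ_of_le (ih s hs).1⟩
  · intro k φ _ ih s hs
    have hs' : s ∈ Finset.image (fun s => if s.head? = some true then s else true :: s) φ.alt := hs
    rcases Finset.mem_image.mp hs' with ⟨s₀, hs₀, rfl⟩
    by_cases hh : s₀.head? = some true
    · rw [if_pos hh]
      refine ⟨(ih s₀ hs₀).1, ?_⟩
      rw [hh]
      intro hcontra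
      exact absurd hcontra (by simp)
    · rw [if_neg hh]
      constructor
      · simp only [List.length_cons]
        have h1 := (ih s₀ hs₀).1
        rcases Nat.lt_or_ge s₀.length (k+1) with h | h
        · omega
        · -- s₀.length = k+1, so s₀ nonempty, head is false or true
          have : s₀.length = k + 1 := le_antisymm h1 h
          exfalso
          match s₀, this with
          | b :: rest, hl =>
            match b with
            | true => exact hh rfl
            | false =>
                have := (ih _ hs₀).2 rfl
                omega
      · intro hcontra
        simp at hcontra
  · exact fun h => isQF_inUp h 0
  · exact fun _ ih s hs => ⟨le_trans (ih s hs).1 (Nat.le_succ _),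
      fun hh => Nat.lt_succ_of_le (ih s hs).1⟩
  · intro k φ _ ih s hs
    have hs' : s ∈ Finset.image (fun s => if s.head? = some false then s else false :: s) φ.alt := hs
    rcases Finset.mem_image.mp hs' with ⟨s₀, hs₀, rfl⟩
    by_cases hh : s₀.head? = some false
    · rw [if_pos hh]
      refine ⟨(ih s₀ hs₀).1, ?_⟩
      rw [hh]
      intro hcontra
      exact absurd hcontra (by simp)
    · rw [if_neg hh]
      constructor
      · simp only [List.length_cons]
        have h1 := (ih s₀ hs₀).1
        rcases Nat.lt_or_ge s₀.length (k+1) with h | h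
        · omega
        · have : s₀.length = k + 1 := le_antisymm h1 h
          exfalso
          match s₀, this with
          | b :: rest, hl =>
            match b with
            | false => exact hh rfl
            | true =>
                have := (ih _ hs₀).2 rfl
                omega
      · intro hcontra
        simp at hcontra

theorem IsSigma.inEp {k : ℕ} {φ : Formula} (h : IsSigma k φ) : inEp k φ := sigma_pi_path.1 h
theorem IsPi.inUp {k : ℕ} {φ : Formula} (h : IsPi k φ) : inUp k φ := sigma_pi_path.2 h

theorem isQF_noDollar {φ : Formula} (h : φ.isQF) : φ.noDollar := by
  induction φ with
  | falsum => trivial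
  | dollar => exact h.elim
  | eq t u => trivial
  | and φ ψ ihφ ihψ => exact ⟨ihφ h.1, ihψ h.2⟩
  | or φ ψ ihφ ihψ => exact ⟨ihφ h.1, ihψ h.2⟩
  | imp φ ψ ihφ ihψ => exact ⟨ihφ h.1, ihψ h.2⟩
  | all φ ih => exact h.elim
  | ex φ ih => exact h.elim

theorem sigma_pi_noDollar :
    (∀ {k : ℕ} {φ : Formula}, IsSigma k φ → φ.noDollar) ∧
    (∀ {k : ℕ} {φ : Formula}, IsPi k φ → φ.noDollar) := by
  refine sigma_pi_ind ?_ ?_ ?_ ?_ ?_ ?_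
  · exact fun h => isQF_noDollar h
  · exact fun _ ih => ih
  · exact fun _ ih => ih
  · exact fun h => isQF_noDollar h
  · exact fun _ ih => ih
  · exact fun _ ih => ih

/-! Decomposition facts. -/

theorem inEp_and {k : ℕ} {φ ψ : Formula} (h : inEp k (φ.and ψ)) : inEp k φ ∧ inEp k ψ :=
  ⟨fun s hs => h s (Finset.mem_union_left _ hs), fun s hs => h s (Finset.mem_union_right _ hs)⟩

theorem inUp_and {k : ℕ} {φ ψ : Formula} (h : inUp k (φ.and ψ)) : inUp k φ ∧ inUp k ψ :=
  ⟨fun s hs => h s (Finset.mem_union_left _ hs), fun s hs => h s (Finset.mem_union_right _ hs)⟩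

theorem inEp_or {k : ℕ} {φ ψ : Formula} (h : inEp k (φ.or ψ)) : inEp k φ ∧ inEp k ψ := inEp_and h
theorem inUp_or {k : ℕ} {φ ψ : Formula} (h : inUp k (φ.or ψ)) : inUp k φ ∧ inUp k ψ := inUp_and h

theorem inEp_imp {k : ℕ} {φ ψ : Formula} (h : inEp k (φ.imp ψ)) : inUp k φ ∧ inEp k ψ := by
  constructor
  · intro s hs
    have hmem : pflip s ∈ (φ.imp ψ).alt :=
      Finset.mem_union_left _ (Finset.mem_image_of_mem _ hs)
    have := h _ hmem
    rw [pflip_length, pflip_head?] at this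
    refine ⟨this.1, fun hh => this.2 ?_⟩
    rw [hh]; rfl
  · exact fun s hs => h s (Finset.mem_union_right _ hs)

theorem inUp_imp {k : ℕ} {φ ψ : Formula} (h : inUp k (φ.imp ψ)) : inEp k φ ∧ inUp k ψ := by
  constructor
  · intro s hs
    have hmem : pflip s ∈ (φ.imp ψ).alt :=
      Finset.mem_union_left _ (Finset.mem_image_of_mem _ hs)
    have := h _ hmem
    rw [pflip_length, pflip_head?] at this
    refine ⟨this.1, fun hh => this.2 ?_⟩
    rw [hh]; rfl
  · exact fun s hs => h s (Finset.mem_union_right _ hs)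

theorem inUp_all {k : ℕ} {φ : Formula} (h : inUp k φ.all) : inUp k φ := by
  intro s hs
  by_cases hh : s.head? = some false
  · have hmem : s ∈ φ.all.alt := by
      refine Finset.mem_image.mpr ⟨s, hs, ?_⟩
      rw [if_pos hh]
    have := h s hmem
    refine ⟨this.1, fun h2 => ?_⟩
    rw [hh] at h2; exact absurd h2 (by simp)
  · have hmem : (false :: s) ∈ φ.all.alt := by
      refine Finset.mem_image.mpr ⟨s, hs, ?_⟩
      rw [if_neg hh]
    have := (h _ hmem).1
    simp only [List.length_cons] at this
    exact ⟨by omega, fun _ => by omega⟩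

theorem inEp_ex {k : ℕ} {φ : Formula} (h : inEp k φ.ex) : inEp k φ := by
  intro s hs
  by_cases hh : s.head? = some true
  · have hmem : s ∈ φ.ex.alt := by
      refine Finset.mem_image.mpr ⟨s, hs, ?_⟩
      rw [if_pos hh]
    have := h s hmem
    refine ⟨this.1, fun h2 => ?_⟩
    rw [hh] at h2; exact absurd h2 (by simp)
  · have hmem : (true :: s) ∈ φ.ex.alt := by
      refine Finset.mem_image.mpr ⟨s, hs, ?_⟩
      rw [if_neg hh]
    have := (h _ hmem).1
    simp only [List.length_cons] at this
    exact ⟨by omega, fun _ => by omega⟩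

theorem inEp_all {j : ℕ} {φ : Formula} (h : inEp j φ.all) : 2 ≤ j ∧ inUp (j-1) φ := by
  have key : ∀ s ∈ φ.alt, (s.head? = some false → s.length < j) ∧
      (s.head? ≠ some false → s.length + 1 < j) := by
    intro s hs
    by_cases hh : s.head? = some false
    · have hmem : s ∈ φ.all.alt := Finset.mem_image.mpr ⟨s, hs, by rw [if_pos hh]⟩
      exact ⟨fun _ => (h s hmem).2 hh, fun h2 => absurd hh h2⟩
    · have hmem : (false :: s) ∈ φ.all.alt := Finset.mem_image.mpr ⟨s, hs, by rw [if_neg hh]⟩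
      have := (h _ hmem).2 rfl
      simp only [List.length_cons] at this
      exact ⟨fun h2 => absurd h2 hh, fun _ => this⟩
  obtain ⟨s, hs⟩ := alt_nonempty φ
  have hj : 2 ≤ j := by
    rcases key s hs with ⟨h1, h2⟩
    match hs2 : s with
    | [] =>
        have := h2 (by simp)
        omega
    | true :: rest =>
        have := h2 (by simp)
        simp at this; omega
    | false :: rest =>
        have := h1 (by simp)
        simp at this; omega
  refine ⟨hj, fun s hs => ?_⟩
  rcases key s hs with ⟨h1, h2⟩
  by_cases hh : s.head? = some false
  · have := h1 hh
    refine ⟨by omega, fun h3 => ?_⟩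
    rw [hh] at h3; exact absurd h3 (by simp)
  · have := h2 hh
    exact ⟨by omega, fun _ => by omega⟩

theorem inUp_ex {j : ℕ} {φ : Formula} (h : inUp j φ.ex) : 2 ≤ j ∧ inEp (j-1) φ := by
  have key : ∀ s ∈ φ.alt, (s.head? = some true → s.length < j) ∧
      (s.head? ≠ some true → s.length + 1 < j) := by
    intro s hs
    by_cases hh : s.head? = some true
    · have hmem : s ∈ φ.ex.alt := Finset.mem_image.mpr ⟨s, hs, by rw [if_pos hh]⟩
      exact ⟨fun _ => (h s hmem).2 hh, fun h2 => absurd hh h2⟩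
    · have hmem : (true :: s) ∈ φ.ex.alt := Finset.mem_image.mpr ⟨s, hs, by rw [if_neg hh]⟩
      have := (h _ hmem).2 rfl
      simp only [List.length_cons] at this
      exact ⟨fun h2 => absurd h2 hh, fun _ => this⟩
  obtain ⟨s, hs⟩ := alt_nonempty φ
  have hj : 2 ≤ j := by
    rcases key s hs with ⟨h1, h2⟩
    match hs2 : s with
    | [] =>
        have := h2 (by simp)
        omega
    | false :: rest =>
        have := h2 (by simp)
        simp at this; omega
    | true :: rest =>
        have := h1 (by simp)
        simp at this; omega
  refine ⟨hj, fun s hs => ?_⟩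
  rcases key s hs with ⟨h1, h2⟩
  by_cases hh : s.head? = some true
  · have := h1 hh
    refine ⟨by omega, fun h3 => ?_⟩
    rw [hh] at h3; exact absurd h3 (by simp)
  · have := h2 hh
    exact ⟨by omega, fun _ => by omega⟩

/-- A degree-bounded `∀`-formula is in `U_k^+`. -/
theorem degree_all_inUp {k : ℕ} {φ : Formula} (h : φ.all.degree ≤ k) : inUp k φ.all := by
  intro s hs
  refine ⟨degree_le_iff.mp h s hs, fun hh => ?_⟩
  exfalso
  rcases Finset.mem_image.mp hs with ⟨s₀, _, rfl⟩
  by_cases h0 : s₀.head? = some false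
  · rw [if_pos h0] at hh
    rw [h0] at hh
    simp at hh
  · rw [if_neg h0] at hh
    simp at hh

/-- A degree-bounded `∃`-formula is in `E_k^+`. -/
theorem degree_ex_inEp {k : ℕ} {φ : Formula} (h : φ.ex.degree ≤ k) : inEp k φ.ex := by
  intro s hs
  refine ⟨degree_le_iff.mp h s hs, fun hh => ?_⟩
  exfalso
  rcases Finset.mem_image.mp hs with ⟨s₀, _, rfl⟩
  by_cases h0 : s₀.head? = some true
  · rw [if_pos h0] at hh
    rw [h0] at hh
    simp at hh
  · rw [if_neg h0] at hh
    simp at hh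

theorem degree_and_le {k : ℕ} {φ ψ : Formula} (h : (φ.and ψ).degree ≤ k) :
    φ.degree ≤ k ∧ ψ.degree ≤ k := by
  rw [degree_le_iff] at h ⊢
  rw [degree_le_iff (φ := ψ)]
  exact ⟨fun s hs => h s (Finset.mem_union_left _ hs),
    fun s hs => h s (Finset.mem_union_right _ hs)⟩

theorem degree_or_le {k : ℕ} {φ ψ : Formula} (h : (φ.or ψ).degree ≤ k) :
    φ.degree ≤ k ∧ ψ.degree ≤ k := degree_and_le h

theorem degree_imp_le {k : ℕ} {φ ψ : Formula} (h : (φ.imp ψ).degree ≤ k) :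
    φ.degree ≤ k ∧ ψ.degree ≤ k := by
  rw [degree_le_iff] at h ⊢
  rw [degree_le_iff (φ := ψ)]
  constructor
  · intro s hs
    have := h (pflip s) (Finset.mem_union_left _ (Finset.mem_image_of_mem _ hs))
    rwa [pflip_length] at this
  · exact fun s hs => h s (Finset.mem_union_right _ hs)

end Paths


section Lem
open Formula

variable {T : Set Formula} {k : ℕ}

/-- ⊢ ¬(a→b) → ¬¬a. -/
theorem P.negImpL {a b : Formula} : Proves T ((a.imp b).neg.imp a.neg.neg) := by
  refine P.ded2 ?_
  refine Prv.mp hyp1 ?_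
  refine Prv.ded ?_
  exact Prv.mp (Prv.ha (HAAx.efq b)) (Prv.mp hyp1 hyp0)

/-- ⊢ ¬(a→b) → ¬b. -/
theorem P.negImpR {a b : Formula} : Proves T ((a.imp b).neg.imp b.neg) := by
  refine P.ded2 ?_
  exact Prv.mp hyp1 (Prv.mp (Prv.ha (HAAx.axK b a)) hyp0)

/-- ⊢ ∃(a → b↑) → (∀a → b). -/
theorem P.exImpAllImp (a b : Formula) :
    Proves T (((a.imp (b.lift 0)).ex).imp ((a.all).imp b)) := by
  refine P.exElim ?_
  show Proves T ((a.imp (b.lift 0)).imp (((a.lift 1).all).imp (b.lift 0)))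
  exact P.impMap (P.allPeel a) (P.id _)

/-- Given pointwise DNE for `a`: ⊢ ¬∃(a → b↑) → ¬(∀a → b). -/
theorem P.negExImp (a b : Formula) (hdnea : Proves T (a.neg.neg.imp a)) :
    Proves T (((a.imp (b.lift 0)).ex).neg.imp ((a.all).imp b).neg) := by
  have c1 : Proves T ((((a.imp (b.lift 0)).ex).neg).imp ((a.imp (b.lift 0)).neg.all)) :=
    P.iffL (P.negEx _)
  have c2 : Proves T (((a.imp (b.lift 0)).neg.all).imp a.all) :=
    P.allMono (P.syl P.negImpL hdnea)
  have c3 : Proves T (((a.imp (b.lift 0)).neg.all).imp b.neg) := by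
    have h1 : Proves T (((a.imp (b.lift 0)).neg.all).imp (((b.neg).lift 0).all)) :=
      P.allMono P.negImpR
    exact P.syl h1 (P.allVacPeel b.neg)
  refine P.ded2 ?_
  have Y := Prv.mp (Prv.thm (T := T) (sub2 (x0 := (a.all).imp b)
    (x1 := ((a.imp (b.lift 0)).ex).neg)) c1) hyp1
  exact Prv.mp (Prv.mp (Prv.thm sub2 c3) Y) (Prv.mp hyp0 (Prv.mp (Prv.thm sub2 c2) Y))

/-- LEM instance from the Σ_k-LEM axioms. -/
theorem lemSigma {j : ℕ} (hj : j ≤ k) {σ : Formula} (h : IsSigma j σ) :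
    Proves (sigLEM k) (σ.or σ.neg) :=
  Proves.ax ⟨σ, h.mono hj, rfl⟩

theorem dneSigma {j : ℕ} (hj : j ≤ k) {σ : Formula} (h : IsSigma j σ) :
    Proves (sigLEM k) (σ.neg.neg.imp σ) :=
  P.lemDne (lemSigma hj h)

/-- LEM propagation through connectives. -/
theorem P.lemAnd {a b : Formula} (ha : Proves T (a.or a.neg)) (hb : Proves T (b.or b.neg)) :
    Proves T ((a.and b).or (a.and b).neg) := by
  refine P.cases ha ?_ ?_
  · refine P.cases hb ?_ ?_
    · refine P.ded2 ?_
      refine Prv.mp (Prv.ha (HAAx.orI1 _ _)) ?_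
      exact Prv.mp (Prv.mp (Prv.ha (HAAx.andI a b)) hyp0) hyp1
    · refine P.ded2 ?_
      refine Prv.mp (Prv.ha (HAAx.orI2 _ _)) ?_
      refine Prv.ded ?_
      exact Prv.mp hyp2 (Prv.mp (Prv.ha (HAAx.andE2 a b)) hyp0)
  · refine P.ded1 ?_
    refine Prv.mp (Prv.ha (HAAx.orI2 _ _)) ?_
    refine Prv.ded ?_
    exact Prv.mp hyp1 (Prv.mp (Prv.ha (HAAx.andE1 a b)) hyp0)

theorem P.lemOr {a b : Formula} (ha : Proves T (a.or a.neg)) (hb : Proves T (b.or b.neg)) :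
    Proves T ((a.or b).or (a.or b).neg) := by
  refine P.cases ha ?_ ?_
  · exact P.syl (Proves.ha (HAAx.orI1 a b)) (Proves.ha (HAAx.orI1 _ _))
  · refine P.cases hb ?_ ?_
    · refine P.ded2 ?_
      exact Prv.mp (Prv.thm sub2 (P.syl (Proves.ha (HAAx.orI2 a b))
        (Proves.ha (HAAx.orI1 _ _)))) hyp1
    · refine P.ded2 ?_
      refine Prv.mp (Prv.ha (HAAx.orI2 _ _)) (Prv.ded ?_)
      exact Prv.mp (Prv.mp (Prv.mp (Prv.ha (HAAx.orE a b Formula.falsum)) hyp1) hyp2) hyp0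

theorem P.lemImp {a b : Formula} (ha : Proves T (a.or a.neg)) (hb : Proves T (b.or b.neg)) :
    Proves T ((a.imp b).or (a.imp b).neg) := by
  refine P.cases hb ?_ ?_
  · exact P.syl (Proves.ha (HAAx.axK b a)) (Proves.ha (HAAx.orI1 _ _))
  · refine P.cases ha ?_ ?_
    · refine P.ded2 ?_
      refine Prv.mp (Prv.ha (HAAx.orI2 _ _)) (Prv.ded ?_)
      exact Prv.mp hyp1 (Prv.mp hyp0 hyp2)
    · refine P.ded2 ?_
      refine Prv.mp (Prv.ha (HAAx.orI1 _ _)) (Prv.ded ?_)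
      exact Prv.mp (Prv.ha (HAAx.efq b)) (Prv.mp hyp2 hyp0)

theorem P.lemFalsum : Proves T (Formula.falsum.or Formula.falsum.neg) :=
  P.orI2 _ (P.id Formula.falsum)

/-- LEM for quantifier-free formulas (over any theory). -/
theorem qfLEM {φ : Formula} (h : φ.isQF) : Proves T (φ.or φ.neg) := by
  induction φ with
  | falsum => exact P.lemFalsum
  | dollar => exact h.elim
  | eq t u => exact Proves.ha (HAAx.atomDec t u)
  | and φ ψ ihφ ihψ => exact P.lemAnd (ihφ h.1) (ihψ h.2)
  | or φ ψ ihφ ihψ => exact P.lemOr (ihφ h.1) (ihψ h.2)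
  | imp φ ψ ihφ ihψ => exact P.lemImp (ihφ h.1) (ihψ h.2)
  | all φ ih => exact h.elim
  | ex φ ih => exact h.elim

/-- DNE for Π_j over HA + Σ_k-LEM, j ≤ k. -/
theorem dnePi {j : ℕ} {π : Formula} (hp : IsPi j π) (hj : j ≤ k) :
    Proves (sigLEM k) (π.neg.neg.imp π) := by
  revert hj
  refine (sigma_pi_ind (motive_1 := fun j σ => j ≤ k → Proves (sigLEM k) (σ.neg.neg.imp σ))
      (motive_2 := fun j π => j ≤ k → Proves (sigLEM k) (π.neg.neg.imp π))
      ?_ ?_ ?_ ?_ ?_ ?_).2 hp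
  · exact fun h _ => P.lemDne (qfLEM h)
  · exact fun hp _ hj => dneSigma hj (IsSigma.ofPi hp)
  · exact fun hs _ hj => dneSigma hj (IsSigma.ex hs)
  · exact fun h _ => P.lemDne (qfLEM h)
  · intro j φ hs _ hj
    exact dneSigma (Nat.le_of_succ_le hj) hs
  · intro j φ hp ih hj
    refine P.impAll ?_
    show Proves (sigLEM k) (((φ.all.neg.neg).lift 0).imp φ)
    exact P.syl (P.dnMap (P.allPeel φ)) (ih hj)

end Lem



section NegPrenex
open Formula

variable {k : ℕ}

/-- Negation prenexation over HA + Σ_k-LEM. -/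
theorem negSigmaPi (k : ℕ) :
    (∀ {j : ℕ} {σ : Formula}, IsSigma j σ → j ≤ k →
      ∃ π, IsPi j π ∧ Proves (sigLEM k) ((σ.neg).iff π)) ∧
    (∀ {j : ℕ} {π : Formula}, IsPi j π → j ≤ k →
      ∃ σ, IsSigma j σ ∧ Proves (sigLEM k) ((π.neg).iff σ)) := by
  refine sigma_pi_ind ?_ ?_ ?_ ?_ ?_ ?_
  · exact fun {φ} h _ => ⟨φ.neg, IsPi.qf ⟨h, trivial⟩, P.iffRefl _⟩
  · intro j φ _ ih hj
    obtain ⟨σ', hσ', hiff⟩ := ih (Nat.le_of_succ_le hj)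
    exact ⟨σ', IsPi.ofSigma hσ', hiff⟩
  · intro j φ _ ih hj
    obtain ⟨π₀, hπ₀, hiff⟩ := ih hj
    exact ⟨π₀.all, IsPi.all hπ₀, P.iffTrans (P.negEx φ) (P.allCongr hiff)⟩
  · exact fun {φ} h _ => ⟨φ.neg, IsSigma.qf ⟨h, trivial⟩, P.iffRefl _⟩
  · intro j φ _ ih hj
    obtain ⟨π', hπ', hiff⟩ := ih (Nat.le_of_succ_le hj)
    exact ⟨π', IsSigma.ofPi hπ', hiff⟩
  · intro j φ hp ih hj
    obtain ⟨σ₀, hσ₀, hiff⟩ := ih hj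
    refine ⟨σ₀.ex, IsSigma.ex hσ₀, P.iffI ?_ ?_⟩
    · -- ¬∀φ → ∃σ₀
      have step2 : Proves (sigLEM k) ((σ₀.ex.neg).imp φ.all) :=
        P.syl (P.iffL (P.negEx σ₀))
          (P.allMono (P.syl (P.contra (P.iffL hiff)) (dnePi hp hj)))
      exact P.syl (P.contra step2) (dneSigma hj (IsSigma.ex hσ₀))
    · -- ∃σ₀ → ¬∀φ
      refine P.exElim ?_
      show Proves (sigLEM k) (σ₀.imp ((φ.lift 1).all.neg))
      exact P.syl (P.iffR hiff) (P.contra (P.allPeel φ))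

theorem negSigma {j : ℕ} {σ : Formula} (hs : IsSigma j σ) (hj : j ≤ k) :
    ∃ π, IsPi j π ∧ Proves (sigLEM k) ((σ.neg).iff π) := (negSigmaPi k).1 hs hj

theorem negPi {j : ℕ} {π : Formula} (hp : IsPi j π) (hj : j ≤ k) :
    ∃ σ, IsSigma j σ ∧ Proves (sigLEM k) ((π.neg).iff σ) := (negSigmaPi k).2 hp hj

/-- LEM for Π_j over HA + Σ_k-LEM, j ≤ k. -/
theorem lemPi {j : ℕ} {π : Formula} (hp : IsPi j π) (hj : j ≤ k) :
    Proves (sigLEM k) (π.or π.neg) := by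
  obtain ⟨σ, hσ, hiff⟩ := negPi hp hj
  refine P.cases (lemSigma hj hσ) ?_ ?_
  · exact P.syl (P.iffR hiff) (Proves.ha (HAAx.orI2 _ _))
  · exact P.syl (P.syl (P.contra (P.iffL hiff)) (dnePi hp hj)) (Proves.ha (HAAx.orI1 _ _))

theorem isSigma_zero_qf {σ : Formula} (h : IsSigma 0 σ) : σ.isQF := by
  refine (sigma_pi_ind (motive_1 := fun j σ => j = 0 → σ.isQF)
    (motive_2 := fun j σ => j = 0 → σ.isQF) ?_ ?_ ?_ ?_ ?_ ?_).1 h rfl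
  · exact fun h _ => h
  · exact fun _ _ h => absurd h (Nat.succ_ne_zero _)
  · exact fun _ _ h => absurd h (Nat.succ_ne_zero _)
  · exact fun h _ => h
  · exact fun _ _ h => absurd h (Nat.succ_ne_zero _)
  · exact fun _ _ h => absurd h (Nat.succ_ne_zero _)

theorem isPi_zero_qf {π : Formula} (h : IsPi 0 π) : π.isQF := by
  refine (sigma_pi_ind (motive_1 := fun j σ => j = 0 → σ.isQF)
    (motive_2 := fun j σ => j = 0 → σ.isQF) ?_ ?_ ?_ ?_ ?_ ?_).2 h rfl
  · exact fun h _ => h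
  · exact fun _ _ h => absurd h (Nat.succ_ne_zero _)
  · exact fun _ _ h => absurd h (Nat.succ_ne_zero _)
  · exact fun h _ => h
  · exact fun _ _ h => absurd h (Nat.succ_ne_zero _)
  · exact fun _ _ h => absurd h (Nat.succ_ne_zero _)

end NegPrenex


section Merge
open Formula

/-- Prenex merging statements at level `j` over HA + Σ_k-LEM. -/
def AndS (k j : ℕ) : Prop := ∀ σ σ', IsSigma j σ → IsSigma j σ' →
  ∃ ρ, IsSigma j ρ ∧ Proves (sigLEM k) ((σ.and σ').iff ρ)
def AndP (k j : ℕ) : Prop := ∀ π π', IsPi j π → IsPi j π' →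
  ∃ ρ, IsPi j ρ ∧ Proves (sigLEM k) ((π.and π').iff ρ)
def OrS (k j : ℕ) : Prop := ∀ σ σ', IsSigma j σ → IsSigma j σ' →
  ∃ ρ, IsSigma j ρ ∧ Proves (sigLEM k) ((σ.or σ').iff ρ)
def OrP (k j : ℕ) : Prop := ∀ π π', IsPi j π → IsPi j π' →
  ∃ ρ, IsPi j ρ ∧ Proves (sigLEM k) ((π.or π').iff ρ)
def ImpPS (k j : ℕ) : Prop := ∀ π σ, IsPi j π → IsSigma j σ →
  ∃ ρ, IsSigma j ρ ∧ Proves (sigLEM k) ((π.imp σ).iff ρ)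
def ImpSP (k j : ℕ) : Prop := ∀ σ π, IsSigma j σ → IsPi j π →
  ∃ ρ, IsPi j ρ ∧ Proves (sigLEM k) ((σ.imp π).iff ρ)

def MergeStmt (k j : ℕ) : Prop :=
  AndS k j ∧ AndP k j ∧ OrS k j ∧ OrP k j ∧ ImpPS k j ∧ ImpSP k j

theorem mergeZero (k : ℕ) : MergeStmt k 0 := by
  refine ⟨?_, ?_, ?_, ?_, ?_, ?_⟩
  · exact fun σ σ' h h' => ⟨σ.and σ', IsSigma.qf ⟨isSigma_zero_qf h, isSigma_zero_qf h'⟩,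
      P.iffRefl _⟩
  · exact fun σ σ' h h' => ⟨σ.and σ', IsPi.qf ⟨isPi_zero_qf h, isPi_zero_qf h'⟩, P.iffRefl _⟩
  · exact fun σ σ' h h' => ⟨σ.or σ', IsSigma.qf ⟨isSigma_zero_qf h, isSigma_zero_qf h'⟩,
      P.iffRefl _⟩
  · exact fun σ σ' h h' => ⟨σ.or σ', IsPi.qf ⟨isPi_zero_qf h, isPi_zero_qf h'⟩, P.iffRefl _⟩
  · exact fun σ σ' h h' => ⟨σ.imp σ', IsSigma.qf ⟨isPi_zero_qf h, isSigma_zero_qf h'⟩,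
      P.iffRefl _⟩
  · exact fun σ σ' h h' => ⟨σ.imp σ', IsPi.qf ⟨isSigma_zero_qf h, isPi_zero_qf h'⟩, P.iffRefl _⟩

theorem mergeSucc (k j' : ℕ) (hk : j' + 1 ≤ k) (M : MergeStmt k j') : MergeStmt k (j' + 1) := by
  have hk' : j' ≤ k := Nat.le_of_succ_le hk
  obtain ⟨mAndS, mAndP, mOrS, mOrP, mImpPS, mImpSP⟩ := M
  -- AND Σ
  have andSL : ∀ {i σ}, IsSigma i σ → i = j' + 1 → ∀ τ, IsPi j' τ →
      ∃ ρ, IsSigma (j'+1) ρ ∧ Proves (sigLEM k) ((σ.and τ).iff ρ) := by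
    intro i σ hσ
    refine (sigma_pi_ind (motive_1 := fun i σ => i = j' + 1 → ∀ τ, IsPi j' τ →
        ∃ ρ, IsSigma (j'+1) ρ ∧ Proves (sigLEM k) ((σ.and τ).iff ρ))
      (motive_2 := fun _ _ => True) ?_ ?_ ?_ ?_ ?_ ?_).1 hσ
    · exact fun _ hi => absurd hi.symm (Nat.succ_ne_zero _)
    · intro i₀ φ hp _ hi τ hτ
      obtain rfl : i₀ = j' := Nat.succ_injective hi
      obtain ⟨ρ, hρ, hiff⟩ := mAndP φ τ hp hτ
      exact ⟨ρ, IsSigma.ofPi hρ, hiff⟩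
    · intro i₀ φ _ ih hi τ hτ
      obtain rfl : i₀ = j' := Nat.succ_injective hi
      obtain ⟨ρ₀, hρ₀, hiff₀⟩ := ih rfl (τ.lift 0) (hτ.lift 0)
      exact ⟨ρ₀.ex, IsSigma.ex hρ₀, P.iffTrans (P.pullExAndL φ τ) (P.exCongr hiff₀)⟩
    · exact fun _ => trivial
    · exact fun _ _ => trivial
    · exact fun _ _ => trivial
  have andS : AndS k (j'+1) := by
    intro σ σ' hσ hσ'
    refine (sigma_pi_ind (motive_1 := fun i σ' => i = j' + 1 → ∀ σ, IsSigma (j'+1) σ →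
        ∃ ρ, IsSigma (j'+1) ρ ∧ Proves (sigLEM k) ((σ.and σ').iff ρ))
      (motive_2 := fun _ _ => True) ?_ ?_ ?_ ?_ ?_ ?_).1 hσ' rfl σ hσ
    · exact fun _ hi => absurd hi.symm (Nat.succ_ne_zero _)
    · intro i₀ φ hp _ hi σ hσ
      obtain rfl : i₀ = j' := Nat.succ_injective hi
      exact andSL hσ rfl φ hp
    · intro i₀ φ _ ih hi σ hσ
      obtain rfl : i₀ = j' := Nat.succ_injective hi
      obtain ⟨ρ₀, hρ₀, hiff₀⟩ := ih rfl (σ.lift 0) (hσ.lift 0)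
      exact ⟨ρ₀.ex, IsSigma.ex hρ₀, P.iffTrans (P.pullExAndR σ φ) (P.exCongr hiff₀)⟩
    · exact fun _ => trivial
    · exact fun _ _ => trivial
    · exact fun _ _ => trivial
  -- AND Π
  have andPL : ∀ {i π}, IsPi i π → i = j' + 1 → ∀ τ, IsSigma j' τ →
      ∃ ρ, IsPi (j'+1) ρ ∧ Proves (sigLEM k) ((π.and τ).iff ρ) := by
    intro i π hπ
    refine (sigma_pi_ind (motive_1 := fun _ _ => True)
      (motive_2 := fun i π => i = j' + 1 → ∀ τ, IsSigma j' τ →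
        ∃ ρ, IsPi (j'+1) ρ ∧ Proves (sigLEM k) ((π.and τ).iff ρ)) ?_ ?_ ?_ ?_ ?_ ?_).2 hπ
    · exact fun _ => trivial
    · exact fun _ _ => trivial
    · exact fun _ _ => trivial
    · exact fun _ hi => absurd hi.symm (Nat.succ_ne_zero _)
    · intro i₀ φ hs _ hi τ hτ
      obtain rfl : i₀ = j' := Nat.succ_injective hi
      obtain ⟨ρ, hρ, hiff⟩ := mAndS φ τ hs hτ
      exact ⟨ρ, IsPi.ofSigma hρ, hiff⟩
    · intro i₀ φ _ ih hi τ hτ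
      obtain rfl : i₀ = j' := Nat.succ_injective hi
      obtain ⟨ρ₀, hρ₀, hiff₀⟩ := ih rfl (τ.lift 0) (hτ.lift 0)
      exact ⟨ρ₀.all, IsPi.all hρ₀, P.iffTrans (P.pullAllAndL φ τ) (P.allCongr hiff₀)⟩
  have andP : AndP k (j'+1) := by
    intro π π' hπ hπ'
    refine (sigma_pi_ind (motive_1 := fun _ _ => True)
      (motive_2 := fun i π' => i = j' + 1 → ∀ π, IsPi (j'+1) π →
        ∃ ρ, IsPi (j'+1) ρ ∧ Proves (sigLEM k) ((π.and π').iff ρ)) ?_ ?_ ?_ ?_ ?_ ?_).2 hπ' rfl π hπ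
    · exact fun _ => trivial
    · exact fun _ _ => trivial
    · exact fun _ _ => trivial
    · exact fun _ hi => absurd hi.symm (Nat.succ_ne_zero _)
    · intro i₀ φ hs _ hi π hπ
      obtain rfl : i₀ = j' := Nat.succ_injective hi
      exact andPL hπ rfl φ hs
    · intro i₀ φ _ ih hi π hπ
      obtain rfl : i₀ = j' := Nat.succ_injective hi
      obtain ⟨ρ₀, hρ₀, hiff₀⟩ := ih rfl (π.lift 0) (hπ.lift 0)
      exact ⟨ρ₀.all, IsPi.all hρ₀, P.iffTrans (P.pullAllAndR π φ) (P.allCongr hiff₀)⟩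
  -- OR Σ
  have orSL : ∀ {i σ}, IsSigma i σ → i = j' + 1 → ∀ τ, IsPi j' τ →
      ∃ ρ, IsSigma (j'+1) ρ ∧ Proves (sigLEM k) ((σ.or τ).iff ρ) := by
    intro i σ hσ
    refine (sigma_pi_ind (motive_1 := fun i σ => i = j' + 1 → ∀ τ, IsPi j' τ →
        ∃ ρ, IsSigma (j'+1) ρ ∧ Proves (sigLEM k) ((σ.or τ).iff ρ))
      (motive_2 := fun _ _ => True) ?_ ?_ ?_ ?_ ?_ ?_).1 hσ
    · exact fun _ hi => absurd hi.symm (Nat.succ_ne_zero _)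
    · intro i₀ φ hp _ hi τ hτ
      obtain rfl : i₀ = j' := Nat.succ_injective hi
      obtain ⟨ρ, hρ, hiff⟩ := mOrP φ τ hp hτ
      exact ⟨ρ, IsSigma.ofPi hρ, hiff⟩
    · intro i₀ φ _ ih hi τ hτ
      obtain rfl : i₀ = j' := Nat.succ_injective hi
      obtain ⟨ρ₀, hρ₀, hiff₀⟩ := ih rfl (τ.lift 0) (hτ.lift 0)
      exact ⟨ρ₀.ex, IsSigma.ex hρ₀, P.iffTrans (P.pullExOrL φ τ) (P.exCongr hiff₀)⟩
    · exact fun _ => trivial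
    · exact fun _ _ => trivial
    · exact fun _ _ => trivial
  have orS : OrS k (j'+1) := by
    intro σ σ' hσ hσ'
    refine (sigma_pi_ind (motive_1 := fun i σ' => i = j' + 1 → ∀ σ, IsSigma (j'+1) σ →
        ∃ ρ, IsSigma (j'+1) ρ ∧ Proves (sigLEM k) ((σ.or σ').iff ρ))
      (motive_2 := fun _ _ => True) ?_ ?_ ?_ ?_ ?_ ?_).1 hσ' rfl σ hσ
    · exact fun _ hi => absurd hi.symm (Nat.succ_ne_zero _)
    · intro i₀ φ hp _ hi σ hσ
      obtain rfl : i₀ = j' := Nat.succ_injective hi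
      exact orSL hσ rfl φ hp
    · intro i₀ φ _ ih hi σ hσ
      obtain rfl : i₀ = j' := Nat.succ_injective hi
      obtain ⟨ρ₀, hρ₀, hiff₀⟩ := ih rfl (σ.lift 0) (hσ.lift 0)
      exact ⟨ρ₀.ex, IsSigma.ex hρ₀, P.iffTrans (P.pullExOrR σ φ) (P.exCongr hiff₀)⟩
    · exact fun _ => trivial
    · exact fun _ _ => trivial
    · exact fun _ _ => trivial
  -- OR Π
  have orPL : ∀ {i π}, IsPi i π → i = j' + 1 → ∀ τ, IsSigma j' τ →
      ∃ ρ, IsPi (j'+1) ρ ∧ Proves (sigLEM k) ((π.or τ).iff ρ) := by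
    intro i π hπ
    refine (sigma_pi_ind (motive_1 := fun _ _ => True)
      (motive_2 := fun i π => i = j' + 1 → ∀ τ, IsSigma j' τ →
        ∃ ρ, IsPi (j'+1) ρ ∧ Proves (sigLEM k) ((π.or τ).iff ρ)) ?_ ?_ ?_ ?_ ?_ ?_).2 hπ
    · exact fun _ => trivial
    · exact fun _ _ => trivial
    · exact fun _ _ => trivial
    · exact fun _ hi => absurd hi.symm (Nat.succ_ne_zero _)
    · intro i₀ φ hs _ hi τ hτ
      obtain rfl : i₀ = j' := Nat.succ_injective hi
      obtain ⟨ρ, hρ, hiff⟩ := mOrS φ τ hs hτ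
      exact ⟨ρ, IsPi.ofSigma hρ, hiff⟩
    · intro i₀ φ _ ih hi τ hτ
      obtain rfl : i₀ = j' := Nat.succ_injective hi
      obtain ⟨ρ₀, hρ₀, hiff₀⟩ := ih rfl (τ.lift 0) ((hτ.lift 0))
      refine ⟨ρ₀.all, IsPi.all hρ₀, P.iffTrans (P.pullAllOrL φ τ ?_) (P.allCongr hiff₀)⟩
      exact lemSigma hk' hτ
  have orP : OrP k (j'+1) := by
    intro π π' hπ hπ'
    refine (sigma_pi_ind (motive_1 := fun _ _ => True)
      (motive_2 := fun i π' => i = j' + 1 → ∀ π, IsPi (j'+1) π →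
        ∃ ρ, IsPi (j'+1) ρ ∧ Proves (sigLEM k) ((π.or π').iff ρ)) ?_ ?_ ?_ ?_ ?_ ?_).2 hπ' rfl π hπ
    · exact fun _ => trivial
    · exact fun _ _ => trivial
    · exact fun _ _ => trivial
    · exact fun _ hi => absurd hi.symm (Nat.succ_ne_zero _)
    · intro i₀ φ hs _ hi π hπ
      obtain rfl : i₀ = j' := Nat.succ_injective hi
      exact orPL hπ rfl φ hs
    · intro i₀ φ _ ih hi π hπ
      obtain rfl : i₀ = j' := Nat.succ_injective hi
      obtain ⟨ρ₀, hρ₀, hiff₀⟩ := ih rfl (π.lift 0) (hπ.lift 0)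
      refine ⟨ρ₀.all, IsPi.all hρ₀, P.iffTrans (P.pullAllOrR π φ ?_) (P.allCongr hiff₀)⟩
      exact lemPi hπ hk
  -- IMP Π→Σ
  have impPSL : ∀ {i π}, IsPi i π → i = j' + 1 → ∀ τ, IsPi j' τ →
      ∃ ρ, IsSigma (j'+1) ρ ∧ Proves (sigLEM k) ((π.imp τ).iff ρ) := by
    intro i π hπ
    refine (sigma_pi_ind (motive_1 := fun _ _ => True)
      (motive_2 := fun i π => i = j' + 1 → ∀ τ, IsPi j' τ →
        ∃ ρ, IsSigma (j'+1) ρ ∧ Proves (sigLEM k) ((π.imp τ).iff ρ)) ?_ ?_ ?_ ?_ ?_ ?_).2 hπ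
    · exact fun _ => trivial
    · exact fun _ _ => trivial
    · exact fun _ _ => trivial
    · exact fun _ hi => absurd hi.symm (Nat.succ_ne_zero _)
    · intro i₀ φ hs _ hi τ hτ
      obtain rfl : i₀ = j' := Nat.succ_injective hi
      obtain ⟨ρ, hρ, hiff⟩ := mImpSP φ τ hs hτ
      exact ⟨ρ, IsSigma.ofPi hρ, hiff⟩
    · intro i₀ φ hφ ih hi τ hτ
      obtain rfl : i₀ = j' := Nat.succ_injective hi
      obtain ⟨ρ₀, hρ₀, hiff₀⟩ := ih rfl (τ.lift 0) (hτ.lift 0)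
      refine ⟨ρ₀.ex, IsSigma.ex hρ₀, P.iffI ?_ ?_⟩
      · -- (∀φ → τ) → ∃ρ₀
        refine P.syl (P.swap (P.negExImp φ τ (dnePi hφ hk))) ?_
        exact P.syl (P.dnMap (P.exMono (P.iffL hiff₀))) (dneSigma hk (IsSigma.ex hρ₀))
      · exact P.syl (P.exMono (P.iffR hiff₀)) (P.exImpAllImp φ τ)
  have impPS : ImpPS k (j'+1) := by
    intro π σ hπ hσ
    refine (sigma_pi_ind (motive_1 := fun i σ => i = j' + 1 → ∀ π, IsPi (j'+1) π →
        ∃ ρ, IsSigma (j'+1) ρ ∧ Proves (sigLEM k) ((π.imp σ).iff ρ))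
      (motive_2 := fun _ _ => True) ?_ ?_ ?_ ?_ ?_ ?_).1 hσ rfl π hπ
    · exact fun _ hi => absurd hi.symm (Nat.succ_ne_zero _)
    · intro i₀ φ hp _ hi π hπ
      obtain rfl : i₀ = j' := Nat.succ_injective hi
      exact impPSL hπ rfl φ hp
    · intro i₀ φ _ ih hi π hπ
      obtain rfl : i₀ = j' := Nat.succ_injective hi
      obtain ⟨ρ₀, hρ₀, hiff₀⟩ := ih rfl (π.lift 0) (hπ.lift 0)
      refine ⟨ρ₀.ex, IsSigma.ex hρ₀,
        P.iffTrans (P.pullExImpR φ π (lemPi hπ hk)) (P.exCongr hiff₀)⟩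
    · exact fun _ => trivial
    · exact fun _ _ => trivial
    · exact fun _ _ => trivial
  -- IMP Σ→Π
  have impSPL : ∀ {i σ}, IsSigma i σ → i = j' + 1 → ∀ τ, IsSigma j' τ →
      ∃ ρ, IsPi (j'+1) ρ ∧ Proves (sigLEM k) ((σ.imp τ).iff ρ) := by
    intro i σ hσ
    refine (sigma_pi_ind (motive_1 := fun i σ => i = j' + 1 → ∀ τ, IsSigma j' τ →
        ∃ ρ, IsPi (j'+1) ρ ∧ Proves (sigLEM k) ((σ.imp τ).iff ρ))
      (motive_2 := fun _ _ => True) ?_ ?_ ?_ ?_ ?_ ?_).1 hσ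
    · exact fun _ hi => absurd hi.symm (Nat.succ_ne_zero _)
    · intro i₀ φ hp _ hi τ hτ
      obtain rfl : i₀ = j' := Nat.succ_injective hi
      obtain ⟨ρ, hρ, hiff⟩ := mImpPS φ τ hp hτ
      exact ⟨ρ, IsPi.ofSigma hρ, hiff⟩
    · intro i₀ φ _ ih hi τ hτ
      obtain rfl : i₀ = j' := Nat.succ_injective hi
      obtain ⟨ρ₀, hρ₀, hiff₀⟩ := ih rfl (τ.lift 0) (hτ.lift 0)
      exact ⟨ρ₀.all, IsPi.all hρ₀, P.iffTrans (P.pullExImpL φ τ) (P.allCongr hiff₀)⟩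
    · exact fun _ => trivial
    · exact fun _ _ => trivial
    · exact fun _ _ => trivial
  have impSP : ImpSP k (j'+1) := by
    intro σ π hσ hπ
    refine (sigma_pi_ind (motive_1 := fun _ _ => True)
      (motive_2 := fun i π => i = j' + 1 → ∀ σ, IsSigma (j'+1) σ →
        ∃ ρ, IsPi (j'+1) ρ ∧ Proves (sigLEM k) ((σ.imp π).iff ρ)) ?_ ?_ ?_ ?_ ?_ ?_).2 hπ rfl σ hσ
    · exact fun _ => trivial
    · exact fun _ _ => trivial
    · exact fun _ _ => trivial
    · exact fun _ hi => absurd hi.symm (Nat.succ_ne_zero _)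
    · intro i₀ φ hs _ hi σ hσ
      obtain rfl : i₀ = j' := Nat.succ_injective hi
      exact impSPL hσ rfl φ hs
    · intro i₀ φ _ ih hi σ hσ
      obtain rfl : i₀ = j' := Nat.succ_injective hi
      obtain ⟨ρ₀, hρ₀, hiff₀⟩ := ih rfl (σ.lift 0) (hσ.lift 0)
      exact ⟨ρ₀.all, IsPi.all hρ₀, P.iffTrans (P.pullAllImpR φ σ) (P.allCongr hiff₀)⟩
  exact ⟨andS, andP, orS, orP, impPS, impSP⟩

theorem mergeAll (k : ℕ) : ∀ j, j ≤ k → MergeStmt k j := by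
  intro j
  induction j with
  | zero => exact fun _ => mergeZero k
  | succ j' ih => exact fun hj => mergeSucc k j' hj (ih (Nat.le_of_succ_le hj))

end Merge


section Main
open Formula

theorem all_alt_pos {φ : Formula} : ∀ s ∈ φ.all.alt, 1 ≤ s.length := by
  intro s hs
  have hs' : s ∈ Finset.image (fun s => if s.head? = some false then s else false :: s) φ.alt := hs
  rcases Finset.mem_image.mp hs' with ⟨s₀, _, rfl⟩
  by_cases hh : s₀.head? = some false
  · rw [if_pos hh]
    cases s₀ with
    | nil => simp at hh
    | cons b t => simp
  · rw [if_neg hh]; simp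

theorem ex_alt_pos {φ : Formula} : ∀ s ∈ φ.ex.alt, 1 ≤ s.length := by
  intro s hs
  have hs' : s ∈ Finset.image (fun s => if s.head? = some true then s else true :: s) φ.alt := hs
  rcases Finset.mem_image.mp hs' with ⟨s₀, _, rfl⟩
  by_cases hh : s₀.head? = some true
  · rw [if_pos hh]
    cases s₀ with
    | nil => simp at hh
    | cons b t => simp
  · rw [if_neg hh]; simp

/-- Main prenexation: over HA + Σ_k-LEM every `E_j^+`/`U_j^+` formula (j ≤ k)
is equivalent to a Σ_j (resp. Π_j) formula. -/
theorem prenex (k : ℕ) : ∀ φ : Formula, φ.noDollar → ∀ j, j ≤ k →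
    (inEp j φ → ∃ σ, IsSigma j σ ∧ Proves (sigLEM k) (φ.iff σ)) ∧
    (inUp j φ → ∃ π, IsPi j π ∧ Proves (sigLEM k) (φ.iff π)) := by
  intro φ
  induction φ with
  | falsum =>
      intro _ j _
      exact ⟨fun _ => ⟨Formula.falsum,
          (IsSigma.qf (show Formula.falsum.isQF from trivial)).mono (Nat.zero_le j), P.iffRefl _⟩,
        fun _ => ⟨Formula.falsum,
          (IsPi.qf (show Formula.falsum.isQF from trivial)).mono (Nat.zero_le j), P.iffRefl _⟩⟩
  | dollar => exact fun h => h.elim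
  | eq t u =>
      intro _ j _
      exact ⟨fun _ => ⟨Formula.eq t u,
          (IsSigma.qf (show (Formula.eq t u).isQF from trivial)).mono (Nat.zero_le j), P.iffRefl _⟩,
        fun _ => ⟨Formula.eq t u,
          (IsPi.qf (show (Formula.eq t u).isQF from trivial)).mono (Nat.zero_le j), P.iffRefl _⟩⟩
  | and φ ψ ihφ ihψ =>
      intro hnd j hj
      constructor
      · intro h
        obtain ⟨σ₁, hσ₁, hiff₁⟩ := (ihφ hnd.1 j hj).1 (inEp_and h).1
        obtain ⟨σ₂, hσ₂, hiff₂⟩ := (ihψ hnd.2 j hj).1 (inEp_and h).2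
        obtain ⟨ρ, hρ, hiffρ⟩ := (mergeAll k j hj).1 σ₁ σ₂ hσ₁ hσ₂
        exact ⟨ρ, hρ, P.iffTrans (P.andCongr hiff₁ hiff₂) hiffρ⟩
      · intro h
        obtain ⟨π₁, hπ₁, hiff₁⟩ := (ihφ hnd.1 j hj).2 (inUp_and h).1
        obtain ⟨π₂, hπ₂, hiff₂⟩ := (ihψ hnd.2 j hj).2 (inUp_and h).2
        obtain ⟨ρ, hρ, hiffρ⟩ := (mergeAll k j hj).2.1 π₁ π₂ hπ₁ hπ₂
        exact ⟨ρ, hρ, P.iffTrans (P.andCongr hiff₁ hiff₂) hiffρ⟩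
  | or φ ψ ihφ ihψ =>
      intro hnd j hj
      constructor
      · intro h
        obtain ⟨σ₁, hσ₁, hiff₁⟩ := (ihφ hnd.1 j hj).1 (inEp_or h).1
        obtain ⟨σ₂, hσ₂, hiff₂⟩ := (ihψ hnd.2 j hj).1 (inEp_or h).2
        obtain ⟨ρ, hρ, hiffρ⟩ := (mergeAll k j hj).2.2.1 σ₁ σ₂ hσ₁ hσ₂
        exact ⟨ρ, hρ, P.iffTrans (P.orCongr hiff₁ hiff₂) hiffρ⟩
      · intro h
        obtain ⟨π₁, hπ₁, hiff₁⟩ := (ihφ hnd.1 j hj).2 (inUp_or h).1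
        obtain ⟨π₂, hπ₂, hiff₂⟩ := (ihψ hnd.2 j hj).2 (inUp_or h).2
        obtain ⟨ρ, hρ, hiffρ⟩ := (mergeAll k j hj).2.2.2.1 π₁ π₂ hπ₁ hπ₂
        exact ⟨ρ, hρ, P.iffTrans (P.orCongr hiff₁ hiff₂) hiffρ⟩
  | imp φ ψ ihφ ihψ =>
      intro hnd j hj
      constructor
      · intro h
        obtain ⟨π₁, hπ₁, hiff₁⟩ := (ihφ hnd.1 j hj).2 (inEp_imp h).1
        obtain ⟨σ₂, hσ₂, hiff₂⟩ := (ihψ hnd.2 j hj).1 (inEp_imp h).2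
        obtain ⟨ρ, hρ, hiffρ⟩ := (mergeAll k j hj).2.2.2.2.1 π₁ σ₂ hπ₁ hσ₂
        exact ⟨ρ, hρ, P.iffTrans (P.impCongr hiff₁ hiff₂) hiffρ⟩
      · intro h
        obtain ⟨σ₁, hσ₁, hiff₁⟩ := (ihφ hnd.1 j hj).1 (inUp_imp h).1
        obtain ⟨π₂, hπ₂, hiff₂⟩ := (ihψ hnd.2 j hj).2 (inUp_imp h).2
        obtain ⟨ρ, hρ, hiffρ⟩ := (mergeAll k j hj).2.2.2.2.2 σ₁ π₂ hσ₁ hπ₂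
        exact ⟨ρ, hρ, P.iffTrans (P.impCongr hiff₁ hiff₂) hiffρ⟩
  | all φ ih =>
      intro hnd j hj
      constructor
      · intro h
        obtain ⟨hj2, hU⟩ := inEp_all h
        match j, hj2, hj with
        | (m+2), _, hj =>
          have hU' : inUp (m+1) φ := hU
          obtain ⟨π₀, hπ₀, hiff₀⟩ := (ih hnd (m+1) (Nat.le_of_succ_le hj)).2 hU'
          exact ⟨π₀.all, IsSigma.ofPi (IsPi.all hπ₀), P.allCongr hiff₀⟩
      · intro h
        have hj1 : 1 ≤ j := by
          obtain ⟨s, hs⟩ := alt_nonempty φ.all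
          exact le_trans (all_alt_pos s hs) (h s hs).1
        match j, hj1, hj with
        | (m+1), _, hj =>
          obtain ⟨π₀, hπ₀, hiff₀⟩ := (ih hnd (m+1) hj).2 (inUp_all h)
          exact ⟨π₀.all, IsPi.all hπ₀, P.allCongr hiff₀⟩
  | ex φ ih =>
      intro hnd j hj
      constructor
      · intro h
        have hj1 : 1 ≤ j := by
          obtain ⟨s, hs⟩ := alt_nonempty φ.ex
          exact le_trans (ex_alt_pos s hs) (h s hs).1
        match j, hj1, hj with
        | (m+1), _, hj =>
          obtain ⟨σ₀, hσ₀, hiff₀⟩ := (ih hnd (m+1) hj).1 (inEp_ex h)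
          exact ⟨σ₀.ex, IsSigma.ex hσ₀, P.exCongr hiff₀⟩
      · intro h
        obtain ⟨hj2, hE⟩ := inUp_ex h
        match j, hj2, hj with
        | (m+2), _, hj =>
          have hE' : inEp (m+1) φ := hE
          obtain ⟨σ₀, hσ₀, hiff₀⟩ := (ih hnd (m+1) (Nat.le_of_succ_le hj)).1 hE'
          exact ⟨σ₀.ex, IsPi.ofSigma (IsSigma.ex hσ₀), P.exCongr hiff₀⟩

end Main


/-- over `HA`, `Σ_k-LEM` and `F_k-LEM` are equivalent schemes:
every instance of each is provable from the other. -/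
theorem sigLEM_iff_fLEM (k : ℕ) :
    (∀ φ : Formula, φ.noDollar → φ.degree ≤ k →
        Proves (sigLEM k) (φ.or φ.neg)) ∧
    (∀ φ : Formula, IsSigma k φ → Proves (fLEM k) (φ.or φ.neg)) := by
  constructor
  · intro φ
    induction φ with
    | falsum => exact fun _ _ => P.lemFalsum
    | dollar => exact fun h _ => h.elim
    | eq t u => exact fun _ _ => Proves.ha (HAAx.atomDec t u)
    | and φ ψ ihφ ihψ =>
        intro hnd hdeg
        exact P.lemAnd (ihφ hnd.1 (degree_and_le hdeg).1) (ihψ hnd.2 (degree_and_le hdeg).2)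
    | or φ ψ ihφ ihψ =>
        intro hnd hdeg
        exact P.lemOr (ihφ hnd.1 (degree_or_le hdeg).1) (ihψ hnd.2 (degree_or_le hdeg).2)
    | imp φ ψ ihφ ihψ =>
        intro hnd hdeg
        exact P.lemImp (ihφ hnd.1 (degree_imp_le hdeg).1) (ihψ hnd.2 (degree_imp_le hdeg).2)
    | all φ _ =>
        intro hnd hdeg
        obtain ⟨π, hπ, hiff⟩ := (prenex k φ.all hnd k le_rfl).2 (degree_all_inUp hdeg)
        exact P.lemTransfer hiff (lemPi hπ le_rfl)
    | ex φ _ =>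
        intro hnd hdeg
        obtain ⟨σ, hσ, hiff⟩ := (prenex k φ.ex hnd k le_rfl).1 (degree_ex_inEp hdeg)
        exact P.lemTransfer hiff (lemSigma le_rfl hσ)
  · intro φ h
    exact Proves.ax ⟨φ, sigma_pi_noDollar.1 h, inEp_degree_le h.inEp, rfl⟩

end SemiClassicalArith
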